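/- arXiv:2407.01357 — 4 statements merged into one kernel-verified Lean document; each statement's English description precedes it below -/
import Mathlib

section
/- Let V be a finite-dimensional real vector space, ω : V × V → ℝ an alternating bilinear form, and v ∈ V a nonzero vector such that the radical of ω equals the line spanned by v; that is, ω(v, y) = 0 for all y ∈ V, and every x ∈ V with ω(x, y) = 0 for all y is a scalar multiple of v. If A : V → V is a linear automorphism with ω(A x, A y) = ω(x, y) for all x, y ∈ V, then A v = (det A) · v. -/
set_option linter.unusedSectionVars false
set_option linter.unusedVariables false
set_option maxHeartbeats 1600000

noncomputable section
namespace MapRadAux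

open Equiv Finset

variable {V : Type*} [AddCommGroup V] [Module ℝ V]
variable (ω : LinearMap.BilinForm ℝ V)

def eta (a b : ℕ) : ℝ :=
  if a % 2 = 0 ∧ b = a + 1 then 1 else if b % 2 = 0 ∧ a = b + 1 then -1 else 0

lemma eta_shift (i a b : ℕ) :
    eta (if a < 2 * i then a else a + 2) (if b < 2 * i then b else b + 2) = eta a b := by
  unfold eta
  split_ifs <;> first | rfl | omega

lemma eta_zero_of (P b : ℕ) (h1 : ¬(P % 2 = 0 ∧ b = P + 1)) (h2 : ¬(b % 2 = 0 ∧ P = b + 1)) :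
    eta P b = 0 := by
  unfold eta
  split_ifs <;> tauto

lemma succAbove_val {n : ℕ} (p : Fin (n + 1)) (q : Fin n) :
    ((p.succAbove q : Fin (n + 1)) : ℕ) = if (q : ℕ) < (p : ℕ) then (q : ℕ) else (q : ℕ) + 1 := by
  rw [Fin.succAbove]
  split_ifs with h1 h2 h2
  · rfl
  · exact absurd (by exact_mod_cast h1) h2
  · exact absurd (by exact_mod_cast h2) h1
  · rfl

def lo {k : ℕ} (i : Fin k) : Fin (2 * k + 1) := ⟨2 * i, by omega⟩
def hi {k : ℕ} (i : Fin k) : Fin (2 * k + 1) := ⟨2 * i + 1, by omega⟩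
def lastIdx (k : ℕ) : Fin (2 * k + 1) := ⟨2 * k, by omega⟩

def GGfun (k : ℕ) (δ : V →ₗ[ℝ] ℝ) (x : Fin (2 * k + 1) → V) : ℝ :=
  (∏ i : Fin k, ω (x (lo i)) (x (hi i))) * δ (x (lastIdx k))

def Sm {m : ℕ} (f : (Fin m → V) → ℝ) (t : Fin m → V) : ℝ :=
  ∑ σ : Equiv.Perm (Fin m), ((Equiv.Perm.sign σ : ℤ) : ℝ) * f (t ∘ σ)

lemma Sm_const_mul {m : ℕ} (c : ℝ) (f : (Fin m → V) → ℝ) (t : Fin m → V) :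
    Sm (fun x => c * f x) t = c * Sm f t := by
  rw [Sm, Sm, Finset.mul_sum]
  exact Finset.sum_congr rfl fun σ _ => by ring

lemma Sm_one (f : (Fin 1 → V) → ℝ) (t : Fin 1 → V) : Sm f t = f t := by
  rw [Sm]
  rw [Finset.sum_eq_single 1]
  · simp
  · intro σ _ hσ
    exact absurd (Subsingleton.elim σ 1) hσ
  · intro h
    exact absurd (Finset.mem_univ _) h

lemma Sm_succ {n : ℕ} (f : (Fin (n + 1) → V) → ℝ) (t : Fin (n + 1) → V) :
    Sm f t = ∑ p : Fin (n + 1),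
      (-1 : ℝ) ^ (p : ℕ) * Sm (fun x => f (Fin.cons (t p) x)) (t ∘ p.succAbove) := by
  rw [Sm, Finset.univ_perm_fin_succ, ← Finset.univ_product_univ, Finset.sum_map,
    Finset.sum_product]
  simp only [Equiv.toEmbedding_apply]
  refine Finset.sum_congr rfl fun p _ => ?_
  induction p using Fin.cases with
  | zero =>
    rw [Fin.val_zero, pow_zero, one_mul, Sm]
    refine Finset.sum_congr rfl fun e _ => ?_
    rw [Equiv.Perm.decomposeFin.symm_sign, if_pos rfl, one_mul]
    have harg0 : t ∘ (Equiv.Perm.decomposeFin.symm (0, e) : Equiv.Perm (Fin (n+1)))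
        = Fin.cons (t 0) ((t ∘ Fin.succAbove 0) ∘ e) := by
      funext j
      induction j using Fin.cases with
      | zero => simp [Equiv.Perm.decomposeFin_symm_apply_zero]
      | succ x =>
        simp [Equiv.Perm.decomposeFin_symm_apply_succ, Fin.succAbove_zero]
    rw [harg0]
  | succ i =>
    have harg : ∀ e : Equiv.Perm (Fin n),
        t ∘ (Equiv.Perm.decomposeFin.symm (i.succ, e) : Equiv.Perm (Fin (n+1)))
        = Fin.cons (t i.succ) ((t ∘ i.succ.succAbove) ∘ (i.cycleRange * e)) := by
      intro e
      funext j
      induction j using Fin.cases with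
      | zero => simp [Equiv.Perm.decomposeFin_symm_apply_zero]
      | succ x =>
        simp only [Function.comp_apply, Equiv.Perm.decomposeFin_symm_apply_succ,
          Fin.cons_succ, Equiv.Perm.coe_mul]
        rw [← Fin.succAbove_cycleRange]
    rw [Sm, Finset.mul_sum, ← Equiv.sum_comp (Equiv.mulLeft i.cycleRange⁻¹)]
    refine Finset.sum_congr rfl fun e _ => ?_
    simp only [Equiv.coe_mulLeft]
    rw [harg, Equiv.Perm.decomposeFin.symm_sign, if_neg (Fin.succ_ne_zero i)]
    rw [mul_inv_cancel_left]
    simp only [Equiv.Perm.sign_mul, Equiv.Perm.sign_inv, Fin.sign_cycleRange, Fin.val_succ,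
      Units.val_mul, Units.val_neg, Units.val_one, Units.val_pow_eq_pow_val]
    push_cast
    ring

lemma GGfun_exists_linear (k : ℕ) (δ : V →ₗ[ℝ] ℝ) [DecidableEq (Fin (2 * k + 1))]
    (x : Fin (2 * k + 1) → V) (j : Fin (2 * k + 1)) :
    ∃ L : V →ₗ[ℝ] ℝ, ∀ y : V, GGfun ω k δ (Function.update x j y) = L y := by
  have hcases : (j : ℕ) = 2 * k ∨ (∃ i : Fin k, j = lo i) ∨ ∃ i : Fin k, j = hi i := by
    rcases Nat.lt_or_ge (j : ℕ) (2 * k) with h | h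
    · rcases Nat.even_or_odd (j : ℕ) with he | ho
      · refine Or.inr (Or.inl ⟨⟨(j : ℕ) / 2, by omega⟩, ?_⟩)
        apply Fin.ext
        simp only [lo]
        obtain ⟨r, hr⟩ := he
        omega
      · refine Or.inr (Or.inr ⟨⟨(j : ℕ) / 2, by omega⟩, ?_⟩)
        apply Fin.ext
        simp only [hi]
        obtain ⟨r, hr⟩ := ho
        omega
    · left
      have := j.isLt
      omega
  rcases hcases with hj | ⟨i₀, rfl⟩ | ⟨i₀, rfl⟩
  · -- j is the last index
    have hj' : j = lastIdx k := Fin.ext (by simpa [lastIdx] using hj)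
    subst hj'
    refine ⟨(∏ i : Fin k, ω (x (lo i)) (x (hi i))) • δ, fun y => ?_⟩
    rw [GGfun]
    have h1 : ∀ i : Fin k, Function.update x (lastIdx k) y (lo i) = x (lo i) := fun i =>
      Function.update_of_ne (by simp only [lo, lastIdx, ne_eq, Fin.ext_iff]; omega) _ _
    have h2 : ∀ i : Fin k, Function.update x (lastIdx k) y (hi i) = x (hi i) := fun i =>
      Function.update_of_ne (by simp only [hi, lastIdx, ne_eq, Fin.ext_iff]; omega) _ _
    simp only [h1, h2, Function.update_self, LinearMap.smul_apply, smul_eq_mul]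
  · -- j = lo i₀
    refine ⟨((∏ i ∈ Finset.univ.erase i₀, ω (x (lo i)) (x (hi i))) * δ (x (lastIdx k))) •
      (ω.flip (x (hi i₀))), fun y => ?_⟩
    rw [GGfun]
    have hne : ∀ i : Fin k, (hi i : Fin (2*k+1)) ≠ lo i₀ := fun i => by
      simp only [hi, lo, ne_eq, Fin.ext_iff]; omega
    have hlast : lastIdx k ≠ lo i₀ := by
      simp only [lastIdx, lo, ne_eq, Fin.ext_iff]
      have := i₀.isLt; omega
    have hsplit : (∏ i : Fin k, ω (Function.update x (lo i₀) y (lo i))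
          (Function.update x (lo i₀) y (hi i)))
        = ω y (x (hi i₀)) * ∏ i ∈ Finset.univ.erase i₀, ω (x (lo i)) (x (hi i)) := by
      rw [← Finset.mul_prod_erase Finset.univ _ (Finset.mem_univ i₀)]
      congr 1
      · rw [Function.update_self, Function.update_of_ne (hne i₀)]
      · refine Finset.prod_congr rfl fun i hi' => ?_
        have hilo : (lo i : Fin (2*k+1)) ≠ lo i₀ := by
          have : i ≠ i₀ := (Finset.mem_erase.mp hi').1
          simp only [lo, ne_eq, Fin.ext_iff]
          simp only [ne_eq, Fin.ext_iff] at this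
          omega
        rw [Function.update_of_ne hilo, Function.update_of_ne (hne i)]
    rw [hsplit, Function.update_of_ne hlast]
    simp only [LinearMap.smul_apply, smul_eq_mul]
    erw [LinearMap.flip_apply]
    ring
  · -- j = hi i₀
    refine ⟨((∏ i ∈ Finset.univ.erase i₀, ω (x (lo i)) (x (hi i))) * δ (x (lastIdx k))) •
      (ω (x (lo i₀))), fun y => ?_⟩
    rw [GGfun]
    have hne : ∀ i : Fin k, (lo i : Fin (2*k+1)) ≠ hi i₀ := fun i => by
      simp only [hi, lo, ne_eq, Fin.ext_iff]; omega
    have hlast : lastIdx k ≠ hi i₀ := by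
      simp only [lastIdx, hi, ne_eq, Fin.ext_iff]
      have := i₀.isLt; omega
    have hsplit : (∏ i : Fin k, ω (Function.update x (hi i₀) y (lo i))
          (Function.update x (hi i₀) y (hi i)))
        = ω (x (lo i₀)) y * ∏ i ∈ Finset.univ.erase i₀, ω (x (lo i)) (x (hi i)) := by
      rw [← Finset.mul_prod_erase Finset.univ _ (Finset.mem_univ i₀)]
      congr 1
      · rw [Function.update_self, Function.update_of_ne (hne i₀)]
      · refine Finset.prod_congr rfl fun i hi' => ?_
        have hihi : (hi i : Fin (2*k+1)) ≠ hi i₀ := by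
          have : i ≠ i₀ := (Finset.mem_erase.mp hi').1
          simp only [hi, ne_eq, Fin.ext_iff]
          simp only [ne_eq, Fin.ext_iff] at this
          omega
        rw [Function.update_of_ne hihi, Function.update_of_ne (hne i)]
    rw [hsplit, Function.update_of_ne hlast]
    simp only [LinearMap.smul_apply, smul_eq_mul]
    ring

def GG (k : ℕ) (δ : V →ₗ[ℝ] ℝ) : MultilinearMap ℝ (fun _ : Fin (2 * k + 1) => V) ℝ where
  toFun := GGfun ω k δ
  map_update_add' := by
    intro inst x j a b
    obtain ⟨L, hL⟩ := GGfun_exists_linear ω k δ x j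
    simp only [hL, map_add]
  map_update_smul' := by
    intro inst x j c a
    obtain ⟨L, hL⟩ := GGfun_exists_linear ω k δ x j
    simp only [hL, map_smul, smul_eq_mul]

@[simp] lemma GG_apply (k : ℕ) (δ : V →ₗ[ℝ] ℝ) (x : Fin (2 * k + 1) → V) :
    GG ω k δ x = GGfun ω k δ x := rfl


lemma GGfun_cons_cons (k : ℕ) (δ : V →ₗ[ℝ] ℝ) (a b : V) (x' : Fin (2 * k + 1) → V) :
    GGfun ω (k + 1) δ (Fin.cons a (Fin.cons b x') : Fin (2 * (k + 1) + 1) → V)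
      = ω a b * GGfun ω k δ x' := by
  rw [GGfun, GGfun, Fin.prod_univ_succ]
  have hlo : ∀ i : Fin k, (lo i.succ : Fin (2 * (k + 1) + 1)) = ((lo i).succ).succ := fun i =>
    Fin.ext (by simp [lo]; omega)
  have hhi : ∀ i : Fin k, (hi i.succ : Fin (2 * (k + 1) + 1)) = ((hi i).succ).succ := fun i =>
    Fin.ext (by simp [hi]; omega)
  have hlast : (lastIdx (k + 1) : Fin (2 * (k + 1) + 1)) = ((lastIdx k).succ).succ :=
    Fin.ext (by simp [lastIdx]; omega)
  have hlo0 : (lo (0 : Fin (k + 1)) : Fin (2 * (k + 1) + 1)) = 0 := Fin.ext (by simp [lo])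
  have hhi0 : (hi (0 : Fin (k + 1)) : Fin (2 * (k + 1) + 1)) = Fin.succ 0 := Fin.ext (by simp [hi])
  simp only [hlo, hhi, hlast, hlo0, hhi0, Fin.cons_zero, Fin.cons_succ]
  ring

lemma eval_std (α : V →ₗ[ℝ] ℝ) (k : ℕ) (t : Fin (2 * k + 1) → V)
    (ht : ∀ i j, ω (t i) (t j) = eta i j) :
    Sm (GGfun ω k α) t = (2 ^ k * Nat.factorial k : ℝ) * α (t (lastIdx k)) := by
  induction k with
  | zero =>
    rw [show Sm (GGfun ω 0 α) t = GGfun ω 0 α t from Sm_one _ _]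
    rw [GGfun]
    simp
  | succ k IH =>
    rw [Sm_succ]
    have key : ∀ p : Fin (2 * (k + 1) + 1),
        (-1 : ℝ) ^ (p : ℕ) * Sm (fun x => GGfun ω (k + 1) α (Fin.cons (t p) x))
            (t ∘ p.succAbove)
          = (if (p : ℕ) < 2 * k + 2 then
              (2 ^ k * Nat.factorial k : ℝ) * α (t (lastIdx (k + 1))) else 0) := by
      intro p
      rw [Sm_succ]
      have hrw : ∀ q : Fin (2 * k + 2),
          Sm (fun x' => GGfun ω (k + 1) α (Fin.cons (t p) (Fin.cons ((t ∘ p.succAbove) q) x')))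
              ((t ∘ p.succAbove) ∘ q.succAbove)
            = ω (t p) (t (p.succAbove q)) * Sm (GGfun ω k α) ((t ∘ p.succAbove) ∘ q.succAbove) := by
        intro q
        rw [show (fun x' => GGfun ω (k + 1) α (Fin.cons (t p) (Fin.cons ((t ∘ p.succAbove) q) x')))
            = fun x' : Fin (2 * k + 1) → V =>
              ω (t p) (t (p.succAbove q)) * GGfun ω k α x' from
          funext fun x' => GGfun_cons_cons ω k α _ _ x']
        exact Sm_const_mul _ _ _
      simp only [hrw]
      show (-1 : ℝ) ^ (p : ℕ) * ∑ q : Fin (2 * k + 2), (-1 : ℝ) ^ (q : ℕ) *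
          (ω (t p) (t (p.succAbove q)) * Sm (GGfun ω k α) ((t ∘ p.succAbove) ∘ q.succAbove))
        = (if (p : ℕ) < 2 * k + 2 then
            (2 ^ k * Nat.factorial k : ℝ) * α (t (lastIdx (k + 1))) else 0)
      by_cases hp : (p : ℕ) < 2 * k + 2
      · rw [if_pos hp]
        have hi2 : (p : ℕ) / 2 < k + 1 := by omega
        set i : ℕ := (p : ℕ) / 2 with hidef
        have hP : (p : ℕ) = 2 * i ∨ (p : ℕ) = 2 * i + 1 := by omega
        set qs : Fin (2 * k + 2) := ⟨2 * i, by omega⟩ with hqs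
        rw [Finset.sum_eq_single qs]
        · -- surviving term
          have hcomp : ∀ a : Fin (2 * k + 1),
              ((p.succAbove (qs.succAbove a)) : ℕ)
                = if (a : ℕ) < 2 * i then (a : ℕ) else (a : ℕ) + 2 := by
            intro a
            rw [succAbove_val, succAbove_val]
            have : (qs : ℕ) = 2 * i := rfl
            split_ifs <;> omega
          have ht'' : ∀ a b : Fin (2 * k + 1),
              ω (((t ∘ p.succAbove) ∘ qs.succAbove) a) (((t ∘ p.succAbove) ∘ qs.succAbove) b)
                = eta a b := by
            intro a b
            have h := ht (p.succAbove (qs.succAbove a)) (p.succAbove (qs.succAbove b))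
            simp only [Function.comp_apply]
            rw [h, hcomp a, hcomp b, eta_shift]
          rw [IH _ ht'']
          have hlast2 : ((t ∘ p.succAbove) ∘ qs.succAbove) (lastIdx k) = t (lastIdx (k + 1)) := by
            simp only [Function.comp_apply]
            congr 1
            apply Fin.ext
            rw [hcomp (lastIdx k)]
            have h1 : ((lastIdx k : Fin (2 * k + 1)) : ℕ) = 2 * k := rfl
            have h2 : ((lastIdx (k + 1) : Fin (2 * (k + 1) + 1)) : ℕ) = 2 * (k + 1) := rfl
            rw [h1, h2, if_neg (by omega)]
            omega
          rw [hlast2]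
          have homega : ω (t p) (t (p.succAbove qs)) = eta (p : ℕ) ((p.succAbove qs : ℕ)) := ht _ _
          have hsaval : ((p.succAbove qs) : ℕ) = if 2 * i < (p : ℕ) then 2 * i else 2 * i + 1 := by
            rw [succAbove_val]
          rcases hP with hPe | hPo
          · have hsv : ((p.succAbove qs) : ℕ) = 2 * i + 1 := by
              rw [hsaval, if_neg (by omega)]
            have he1 : eta (2 * i) (2 * i + 1) = 1 := by unfold eta; rw [if_pos (by omega)]
            rw [homega, hsv, hPe, he1, show (qs : ℕ) = 2 * i from rfl]
            rw [show ((-1 : ℝ)) ^ (2 * i) = 1 from by rw [pow_mul]; norm_num]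
            ring
          · have hsv : ((p.succAbove qs) : ℕ) = 2 * i := by
              rw [hsaval, if_pos (by omega)]
            have he1 : eta (2 * i + 1) (2 * i) = -1 := by
              unfold eta
              rw [if_neg (by omega), if_pos (by omega)]
            rw [homega, hsv, hPo, he1, show (qs : ℕ) = 2 * i from rfl]
            rw [show ((-1 : ℝ)) ^ (2 * i) = 1 from by rw [pow_mul]; norm_num]
            rw [show ((-1 : ℝ)) ^ (2 * i + 1) = -1 from by rw [pow_succ, pow_mul]; norm_num]
            ring
        · -- other q give zero
          intro q _ hq
          have hzero : ω (t p) (t (p.succAbove q)) = 0 := by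
            rw [ht]
            have hsa : ((p.succAbove q) : ℕ) = if (q : ℕ) < (p : ℕ) then (q : ℕ) else (q : ℕ) + 1 :=
              succAbove_val p q
            have hqsv : ((qs : Fin (2 * k + 2)) : ℕ) = 2 * i := rfl
            have hqne : (q : ℕ) ≠ 2 * i := by
              intro h
              exact hq (Fin.ext (by rw [hqsv]; exact h))
            rcases Nat.lt_or_ge (q : ℕ) (p : ℕ) with hlt | hge
            · have hsv : ((p.succAbove q) : ℕ) = q := by rw [hsa, if_pos hlt]
              rw [hsv]
              apply eta_zero_of
              · rintro ⟨hpar, hb⟩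
                omega
              · rintro ⟨hpar, hb⟩
                omega
            · have hsv : ((p.succAbove q) : ℕ) = (q : ℕ) + 1 := by rw [hsa, if_neg (by omega)]
              rw [hsv]
              apply eta_zero_of
              · rintro ⟨hpar, hb⟩
                omega
              · rintro ⟨hpar, hb⟩
                omega
          rw [hzero]
          ring
        · intro h
          exact absurd (Finset.mem_univ _) h
      · rw [if_neg hp]
        have hp2 : (p : ℕ) = 2 * k + 2 := by have := p.isLt; omega
        have : ∀ q : Fin (2 * k + 2),
            (-1 : ℝ) ^ (q : ℕ) * (ω (t p) (t (p.succAbove q)) *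
              Sm (GGfun ω k α) ((t ∘ p.succAbove) ∘ q.succAbove)) = 0 := by
          intro q
          have hzero : ω (t p) (t (p.succAbove q)) = 0 := by
            rw [ht]
            have hsa : ((p.succAbove q) : ℕ) = if (q : ℕ) < (p : ℕ) then (q : ℕ) else (q : ℕ) + 1 :=
              succAbove_val p q
            have hql := q.isLt
            rcases Nat.lt_or_ge (q : ℕ) (p : ℕ) with hlt | hge
            · have hsv : ((p.succAbove q) : ℕ) = q := by rw [hsa, if_pos hlt]
              rw [hsv]
              apply eta_zero_of
              · rintro ⟨hpar, hb⟩
                omega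
              · rintro ⟨hpar, hb⟩
                omega
            · have hsv : ((p.succAbove q) : ℕ) = (q : ℕ) + 1 := by rw [hsa, if_neg (by omega)]
              rw [hsv]
              apply eta_zero_of
              · rintro ⟨hpar, hb⟩
                omega
              · rintro ⟨hpar, hb⟩
                omega
          rw [hzero]
          ring
        rw [Finset.sum_eq_zero fun q _ => this q]
        ring
    rw [Finset.sum_congr rfl fun p _ => key p]
    rw [Fin.sum_univ_castSucc]
    have hlastp : ((Fin.last (2 * (k + 1)) : Fin (2 * (k + 1) + 1)) : ℕ) = 2 * k + 2 := by
      simp [Fin.last]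
      omega
    rw [if_neg (by rw [hlastp]; omega)]
    have hcast : ∀ p : Fin (2 * (k + 1)),
        (if ((p.castSucc : Fin (2 * (k + 1) + 1)) : ℕ) < 2 * k + 2 then
            (2 ^ k * Nat.factorial k : ℝ) * α (t (lastIdx (k + 1))) else 0)
          = (2 ^ k * Nat.factorial k : ℝ) * α (t (lastIdx (k + 1))) := by
      intro p
      rw [if_pos]
      rw [Fin.coe_castSucc]
      have := p.isLt
      omega
    rw [Finset.sum_congr rfl fun p _ => hcast p]
    rw [Finset.sum_const, Finset.card_univ, Fintype.card_fin]
    rw [Nat.factorial_succ]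
    push_cast
    ring


lemma exists_symp [FiniteDimensional ℝ V]
    (halt : ∀ x : V, ω x x = 0) (hskew : ∀ x y : V, ω x y = - ω y x)
    (v : V)
    (hv1 : ∀ y, ω v y = 0) (hv2 : ∀ y, ω y v = 0) :
    ∀ (n : ℕ) (S : Submodule ℝ V), Module.finrank ℝ S = n → v ∈ S →
    (∀ x ∈ S, (∀ y ∈ S, ω x y = 0) → ∃ c : ℝ, x = c • v) →
    ∃ (k : ℕ) (t : Fin (2 * k + 1) → V),
      (∀ i, t i ∈ S) ∧ t (lastIdx k) = v ∧ (∀ i j, ω (t i) (t j) = eta i j) ∧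
        S ≤ Submodule.span ℝ (Set.range t) := by
  intro n
  induction n using Nat.strong_induction_on with
  | _ n IH =>
    intro S hSn hvS hradS
    by_cases hflat : ∀ x ∈ S, ∀ y ∈ S, ω x y = 0
    · refine ⟨0, fun _ => v, fun _ => hvS, rfl, ?_, ?_⟩
      · intro i j
        have hi0 : (i : ℕ) = 0 := by omega
        have hj0 : (j : ℕ) = 0 := by omega
        rw [hi0, hj0, halt]
        unfold eta
        norm_num
      · intro x hx
        obtain ⟨c, hc⟩ := hradS x hx (hflat x hx)
        rw [hc]
        exact Submodule.smul_mem _ _ (Submodule.subset_span ⟨0, rfl⟩)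
    · push_neg at hflat
      obtain ⟨u, huS, w, hwS, hw⟩ := hflat
      obtain ⟨w', hw'S, huw'⟩ : ∃ w' ∈ S, ω u w' = 1 :=
        ⟨(ω u w)⁻¹ • w, Submodule.smul_mem _ _ hwS, by
          rw [map_smul, smul_eq_mul, inv_mul_cancel₀ hw]⟩
      have hw'u : ω w' u = -1 := by rw [hskew, huw']
      -- the symplectic complement of u, w' inside S
      set Q : Submodule ℝ V := S ⊓ LinearMap.ker (ω u) ⊓ LinearMap.ker (ω w') with hQdef
      have hQmem : ∀ x, x ∈ Q ↔ x ∈ S ∧ ω u x = 0 ∧ ω w' x = 0 := by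
        intro x
        simp [hQdef, Submodule.mem_inf, and_assoc]
      have hQle : Q ≤ S := fun x hx => ((hQmem x).mp hx).1
      have hvQ : v ∈ Q := (hQmem v).mpr ⟨hvS, hv2 u, hv2 w'⟩
      have huQ : u ∉ Q := by
        intro h
        have := ((hQmem u).mp h).2.2
        rw [hw'u] at this
        norm_num at this
      have hQlt : Q < S := lt_of_le_of_ne hQle (fun h => huQ (h ▸ huS))
      -- decomposition of elements of S
      have hdec : ∀ y ∈ S, y - (ω u y) • w' + (ω w' y) • u ∈ Q := by
        intro y hyS
        refine (hQmem _).mpr ⟨?_, ?_, ?_⟩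
        · exact Submodule.add_mem _ (Submodule.sub_mem _ hyS (Submodule.smul_mem _ _ hw'S))
            (Submodule.smul_mem _ _ huS)
        · simp only [map_add, map_sub, map_smul, smul_eq_mul]
          rw [huw', halt u]
          ring
        · simp only [map_add, map_sub, map_smul, smul_eq_mul]
          rw [hw'u, halt w']
          ring
      -- radical condition for Q
      have hradQ : ∀ x ∈ Q, (∀ y ∈ Q, ω x y = 0) → ∃ c : ℝ, x = c • v := by
        intro x hxQ hx
        refine hradS x (hQle hxQ) ?_
        intro y hyS
        obtain ⟨hxS, hux, hw'x⟩ := (hQmem x).mp hxQ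
        have hxu : ω x u = 0 := by rw [hskew, hux]; ring
        have hxw' : ω x w' = 0 := by rw [hskew, hw'x]; ring
        have hz := hx _ (hdec y hyS)
        simp only [map_add, map_sub, map_smul, smul_eq_mul] at hz
        rw [hxu, hxw'] at hz
        linarith
      -- apply the induction hypothesis
      have hQfin : Module.finrank ℝ Q < n := by
        rw [← hSn]
        exact Submodule.finrank_lt_finrank_of_lt hQlt
      obtain ⟨k', t', ht'Q, ht'last, ht'η, ht'span⟩ :=
        IH (Module.finrank ℝ Q) hQfin Q rfl hvQ hradQ
      refine ⟨k' + 1, Fin.cons u (Fin.cons w' t'), ?_, ?_, ?_, ?_⟩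
      · intro i
        induction i using Fin.cases with
        | zero => simpa using huS
        | succ i =>
          induction i using Fin.cases with
          | zero => simpa using hw'S
          | succ i => simpa using hQle (ht'Q i)
      · have : (lastIdx (k' + 1) : Fin (2 * (k' + 1) + 1)) = ((lastIdx k').succ).succ :=
          Fin.ext (by simp [lastIdx]; omega)
        rw [this, Fin.cons_succ, Fin.cons_succ, ht'last]
      · -- the eta conditions
        have huQ' : ∀ i, ω u (t' i) = 0 := fun i => ((hQmem _).mp (ht'Q i)).2.1
        have hw'Q : ∀ i, ω w' (t' i) = 0 := fun i => ((hQmem _).mp (ht'Q i)).2.2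
        have hQu : ∀ i, ω (t' i) u = 0 := fun i => by rw [hskew, huQ']; ring
        have hQw' : ∀ i, ω (t' i) w' = 0 := fun i => by rw [hskew, hw'Q]; ring
        have heta00 : eta 0 0 = 0 := by unfold eta; norm_num
        have heta01 : eta 0 1 = 1 := by unfold eta; norm_num
        have heta10 : eta 1 0 = -1 := by unfold eta; norm_num
        have heta11 : eta 1 1 = 0 := by unfold eta; norm_num
        have heta0s : ∀ m : ℕ, eta 0 (m + 2) = 0 := by
          intro m; unfold eta; rw [if_neg (by omega), if_neg (by omega)]
        have heta1s : ∀ m : ℕ, eta 1 (m + 2) = 0 := by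
          intro m; unfold eta; rw [if_neg (by omega), if_neg (by omega)]
        have hetas0 : ∀ m : ℕ, eta (m + 2) 0 = 0 := by
          intro m; unfold eta; rw [if_neg (by omega), if_neg (by omega)]
        have hetas1 : ∀ m : ℕ, eta (m + 2) 1 = 0 := by
          intro m; unfold eta; rw [if_neg (by omega), if_neg (by omega)]
        have hetass : ∀ m l : ℕ, eta (m + 2) (l + 2) = eta m l := by
          intro m l
          have := eta_shift 0 m l
          simpa using this
        have h1mod : (1 : ℕ) % (2 * (k' + 1) + 1) = 1 := Nat.mod_eq_of_lt (by omega)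
        intro i j
        induction i using Fin.cases with
        | zero =>
          induction j using Fin.cases with
          | zero => simpa [halt] using heta00.symm
          | succ j =>
            induction j using Fin.cases with
            | zero => simpa [huw', h1mod] using heta01.symm
            | succ j => simpa [huQ'] using (heta0s (j : ℕ)).symm
        | succ i =>
          induction i using Fin.cases with
          | zero =>
            induction j using Fin.cases with
            | zero => simpa [hw'u, h1mod] using heta10.symm
            | succ j =>
              induction j using Fin.cases with
              | zero => simpa [halt, h1mod] using heta11.symm
              | succ j => simpa [hw'Q, h1mod] using (heta1s (j : ℕ)).symm
          | succ i =>
            induction j using Fin.cases with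
            | zero => simpa [hQu] using (hetas0 (i : ℕ)).symm
            | succ j =>
              induction j using Fin.cases with
              | zero => simpa [hQw', h1mod] using (hetas1 (i : ℕ)).symm
              | succ j =>
                have := ht'η i j
                simpa [hetass] using this
      · -- spanning
        intro y hyS
        have hz := hdec y hyS
        have hrange : Set.range t' ⊆ Set.range (Fin.cons u (Fin.cons w' t') :
            Fin (2 * (k' + 1) + 1) → V) := by
          rintro x ⟨i, rfl⟩
          exact ⟨(i.succ).succ, by simp⟩
        have hspan' : (Submodule.span ℝ (Set.range t')) ≤
            Submodule.span ℝ (Set.range (Fin.cons u (Fin.cons w' t') :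
              Fin (2 * (k' + 1) + 1) → V)) := Submodule.span_mono hrange
        have hzspan := hspan' (ht'span hz)
        have huspan : u ∈ Submodule.span ℝ (Set.range (Fin.cons u (Fin.cons w' t') :
            Fin (2 * (k' + 1) + 1) → V)) := Submodule.subset_span ⟨0, by simp⟩
        have hw'span : w' ∈ Submodule.span ℝ (Set.range (Fin.cons u (Fin.cons w' t') :
            Fin (2 * (k' + 1) + 1) → V)) :=
          Submodule.subset_span ⟨(0 : Fin (2 * k' + 2)).succ, by simp⟩
        have : y = (y - (ω u y) • w' + (ω w' y) • u) + (ω u y) • w' - (ω w' y) • u := by abel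
        rw [this]
        exact Submodule.sub_mem _ (Submodule.add_mem _ hzspan (Submodule.smul_mem _ _ hw'span))
          (Submodule.smul_mem _ _ huspan)


lemma alt_apply_eq_Sm (k : ℕ) (δ : V →ₗ[ℝ] ℝ) (t : Fin (2 * k + 1) → V) :
    MultilinearMap.alternatization (GG ω k δ) t = Sm (GGfun ω k δ) t := by
  rw [MultilinearMap.alternatization_apply, Sm]
  refine Finset.sum_congr rfl fun σ _ => ?_
  rw [MultilinearMap.domDomCongr_apply]
  rw [Units.smul_def, zsmul_eq_mul]
  rfl

lemma alt_compLinearMap {m : ℕ} (H : MultilinearMap ℝ (fun _ : Fin m => V) ℝ) (g : V →ₗ[ℝ] V) :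
    (MultilinearMap.alternatization H).compLinearMap g
      = MultilinearMap.alternatization (H.compLinearMap (fun _ => g)) := by
  ext x
  rw [AlternatingMap.compLinearMap_apply, MultilinearMap.alternatization_apply,
    MultilinearMap.alternatization_apply]
  refine Finset.sum_congr rfl fun σ _ => ?_
  congr 1

lemma alt_smul {m : ℕ} (c : ℝ) (H : MultilinearMap ℝ (fun _ : Fin m => V) ℝ) :
    MultilinearMap.alternatization (c • H) = c • MultilinearMap.alternatization H := by
  ext x
  rw [AlternatingMap.smul_apply, MultilinearMap.alternatization_apply,
    MultilinearMap.alternatization_apply, Finset.smul_sum]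
  refine Finset.sum_congr rfl fun σ _ => ?_
  rw [MultilinearMap.domDomCongr_apply, MultilinearMap.domDomCongr_apply,
    MultilinearMap.smul_apply, smul_comm]

lemma Sm_eq_zero (k : ℕ) (δ : V →ₗ[ℝ] ℝ) (t : Fin (2 * k + 1) → V) (v : V)
    (hvt : t (lastIdx k) = v)
    (h1 : ∀ y, ω v y = 0) (h2 : ∀ y, ω y v = 0) (hδ : δ v = 0) :
    Sm (GGfun ω k δ) t = 0 := by
  rw [Sm]
  apply Finset.sum_eq_zero
  intro σ _
  suffices h : GGfun ω k δ (t ∘ σ) = 0 by rw [h, mul_zero]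
  rw [GGfun]
  by_cases hσ : σ (lastIdx k) = lastIdx k
  · have hz : δ ((t ∘ σ) (lastIdx k)) = 0 := by rw [Function.comp_apply, hσ, hvt, hδ]
    rw [hz, mul_zero]
  · have hσj : σ (σ.symm (lastIdx k)) = lastIdx k := Equiv.apply_symm_apply σ _
    set j := σ.symm (lastIdx k) with hjdef
    have hjne : j ≠ lastIdx k := by
      intro h
      rw [h] at hσj
      exact hσ hσj
    have hjlt : (j : ℕ) < 2 * k := by
      have h1' := j.isLt
      have h2' : (j : ℕ) ≠ 2 * k := fun h => hjne (Fin.ext h)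
      omega
    have hcases : (∃ i₀ : Fin k, j = lo i₀) ∨ ∃ i₀ : Fin k, j = hi i₀ := by
      rcases Nat.even_or_odd (j : ℕ) with he | ho
      · refine Or.inl ⟨⟨(j : ℕ) / 2, by omega⟩, Fin.ext ?_⟩
        obtain ⟨r, hr⟩ := he
        simp only [lo]
        omega
      · refine Or.inr ⟨⟨(j : ℕ) / 2, by omega⟩, Fin.ext ?_⟩
        obtain ⟨r, hr⟩ := ho
        simp only [hi]
        omega
    rcases hcases with ⟨i₀, hji⟩ | ⟨i₀, hji⟩
    · have hz : ω ((t ∘ σ) (lo i₀)) ((t ∘ σ) (hi i₀)) = 0 := by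
        rw [Function.comp_apply, ← hji, hσj, hvt]
        exact h1 _
      rw [Finset.prod_eq_zero (Finset.mem_univ i₀) hz, zero_mul]
    · have hz : ω ((t ∘ σ) (lo i₀)) ((t ∘ σ) (hi i₀)) = 0 := by
        rw [Function.comp_apply, Function.comp_apply, ← hji, hσj, hvt]
        exact h2 _
      rw [Finset.prod_eq_zero (Finset.mem_univ i₀) hz, zero_mul]

lemma t_linearIndependent (k : ℕ) (t : Fin (2 * k + 1) → V) (v : V) (hv : v ≠ 0)
    (hvt : t (lastIdx k) = v) (ht : ∀ i j, ω (t i) (t j) = eta i j) :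
    LinearIndependent ℝ t := by
  rw [Fintype.linearIndependent_iff]
  intro g hg
  have hpair : ∀ j : Fin (2 * k + 1), (j : ℕ) < 2 * k → g j = 0 := by
    intro j hj
    have key : ∀ j' : Fin (2 * k + 1), (∀ i : Fin (2 * k + 1), i ≠ j → eta i j' = 0) →
        g j * eta j j' = 0 := by
      intro j' hzero
      have happ : ω (∑ i, g i • t i) (t j') = 0 := by rw [hg]; simp
      rw [map_sum, LinearMap.sum_apply] at happ
      have hterm : ∀ i : Fin (2 * k + 1), ω (g i • t i) (t j') = g i * eta i j' := fun i => by
        rw [map_smul, LinearMap.smul_apply, smul_eq_mul, ht]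
      rw [Finset.sum_congr rfl fun i _ => hterm i, Finset.sum_eq_single j] at happ
      · exact happ
      · intro i _ hi'
        rw [hzero i hi', mul_zero]
      · intro h
        exact absurd (Finset.mem_univ _) h
    rcases Nat.even_or_odd (j : ℕ) with hpar | hpar
    · have h2 : (j : ℕ) % 2 = 0 := Nat.even_iff.mp hpar
      have hlt : (j : ℕ) + 1 < 2 * k + 1 := by omega
      have hzero : ∀ i : Fin (2 * k + 1), i ≠ j →
          eta i ((⟨(j : ℕ) + 1, hlt⟩ : Fin (2 * k + 1)) : ℕ) = 0 := by
        intro i hi'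
        have hiv : (i : ℕ) ≠ (j : ℕ) := fun h => hi' (Fin.ext h)
        show eta (i : ℕ) ((j : ℕ) + 1) = 0
        apply eta_zero_of
        · rintro ⟨hp, hb⟩
          omega
        · rintro ⟨hp, hb⟩
          omega
      have hval : eta (j : ℕ) ((j : ℕ) + 1) = 1 := by
        unfold eta
        have hcnd : (j : ℕ) % 2 = 0 ∧ (j : ℕ) + 1 = (j : ℕ) + 1 := ⟨h2, rfl⟩
        rw [if_pos hcnd]
      have h := key ⟨(j : ℕ) + 1, hlt⟩ hzero
      rw [show ((⟨(j : ℕ) + 1, hlt⟩ : Fin (2 * k + 1)) : ℕ) = (j : ℕ) + 1 from rfl, hval,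
        mul_one] at h
      exact h
    · have h2 : (j : ℕ) % 2 = 1 := Nat.odd_iff.mp hpar
      have hlt : (j : ℕ) - 1 < 2 * k + 1 := by omega
      have hzero : ∀ i : Fin (2 * k + 1), i ≠ j →
          eta i ((⟨(j : ℕ) - 1, hlt⟩ : Fin (2 * k + 1)) : ℕ) = 0 := by
        intro i hi'
        have hiv : (i : ℕ) ≠ (j : ℕ) := fun h => hi' (Fin.ext h)
        show eta (i : ℕ) ((j : ℕ) - 1) = 0
        apply eta_zero_of
        · rintro ⟨hp, hb⟩
          omega
        · rintro ⟨hp, hb⟩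
          omega
      have hval : eta (j : ℕ) ((j : ℕ) - 1) = -1 := by
        unfold eta
        have hc1 : ¬((j : ℕ) % 2 = 0 ∧ (j : ℕ) - 1 = (j : ℕ) + 1) := by omega
        have hc2 : ((j : ℕ) - 1) % 2 = 0 ∧ (j : ℕ) = ((j : ℕ) - 1) + 1 := by omega
        rw [if_neg hc1, if_pos hc2]
      have h := key ⟨(j : ℕ) - 1, hlt⟩ hzero
      rw [show ((⟨(j : ℕ) - 1, hlt⟩ : Fin (2 * k + 1)) : ℕ) = (j : ℕ) - 1 from rfl, hval] at h
      linarith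
  intro i
  by_cases hi' : (i : ℕ) < 2 * k
  · exact hpair i hi'
  · have hilast : i = lastIdx k := by
      apply Fin.ext
      have := i.isLt
      show (i : ℕ) = 2 * k
      omega
    subst hilast
    rw [Finset.sum_eq_single (lastIdx k)] at hg
    · rw [hvt] at hg
      have := smul_eq_zero.mp hg
      tauto
    · intro b _ hb
      have hblt : (b : ℕ) < 2 * k := by
        have h1' := b.isLt
        have h2' : (b : ℕ) ≠ 2 * k := fun h => hb (Fin.ext h)
        omega
      rw [hpair b hblt, zero_smul]
    · intro h
      exact absurd (Finset.mem_univ _) h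

end MapRadAux

open MapRadAux in
/-- If the radical of an alternating bilinear form `ω` on a finite-dimensional real
vector space is the line spanned by a nonzero vector `v`, then any linear automorphism
preserving `ω` sends `v` to `(det A) • v`. -/
theorem map_radical_eq_det_smul
    {V : Type*} [AddCommGroup V] [Module ℝ V] [FiniteDimensional ℝ V]
    (ω : LinearMap.BilinForm ℝ V)
    (halt : ∀ x : V, ω x x = 0)
    (v : V) (hv : v ≠ 0)
    (hrad₁ : ∀ y : V, ω v y = 0)
    (hrad₂ : ∀ x : V, (∀ y : V, ω x y = 0) → ∃ c : ℝ, x = c • v)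
    (A : V ≃ₗ[ℝ] V)
    (hA : ∀ x y : V, ω (A x) (A y) = ω x y) :
    A v = (LinearMap.det (A : V →ₗ[ℝ] V)) • v := by
  classical
  have hskew : ∀ x y : V, ω x y = - ω y x := by
    intro x y
    have h := halt (x + y)
    simp only [map_add, LinearMap.add_apply] at h
    rw [halt x, halt y] at h
    linarith
  have hrad₁' : ∀ y : V, ω y v = 0 := fun y => by rw [hskew, hrad₁]; ring
  -- A v is in the radical
  have hAv : ∀ y : V, ω (A v) y = 0 := by
    intro y
    have h := hA v (A.symm y)
    rw [LinearEquiv.apply_symm_apply] at h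
    rw [h, hrad₁]
  obtain ⟨c, hc⟩ := hrad₂ (A v) hAv
  -- symplectic tuple
  obtain ⟨k, t, htS, htlast, htη, htspan⟩ :=
    exists_symp ω halt hskew v hrad₁ hrad₁' (Module.finrank ℝ (⊤ : Submodule ℝ V)) ⊤ rfl
      Submodule.mem_top (fun x _ h => hrad₂ x (fun y => h y Submodule.mem_top))
  have hli : LinearIndependent ℝ t := t_linearIndependent ω k t v hv htlast htη
  have hspan : ⊤ ≤ Submodule.span ℝ (Set.range t) := fun x _ => htspan Submodule.mem_top
  let e : Module.Basis (Fin (2 * k + 1)) ℝ V := Module.Basis.mk hli hspan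
  have he : ⇑e = t := Module.Basis.coe_mk hli hspan
  -- the linear functional
  let α : V →ₗ[ℝ] ℝ := e.coord (lastIdx k)
  have hαv : α v = 1 := by
    have hev : e (lastIdx k) = v := by rw [show e (lastIdx k) = t (lastIdx k) from congrFun he _, htlast]
    show e.coord (lastIdx k) v = 1
    rw [← hev]
    simp [Module.Basis.coord_apply, Module.Basis.repr_self]
  -- the top alternating form
  set F : V [⋀^Fin (2 * k + 1)]→ₗ[ℝ] ℝ := MultilinearMap.alternatization (GG ω k α) with hFdef
  -- its invariance property
  set γ : V →ₗ[ℝ] ℝ := α ∘ₗ (A : V →ₗ[ℝ] V) with hγdef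
  set β : V →ₗ[ℝ] ℝ := γ - c • α with hβdef
  have hβv : β v = 0 := by
    rw [hβdef]
    simp only [LinearMap.sub_apply, LinearMap.smul_apply, smul_eq_mul]
    rw [hγdef]
    simp only [LinearMap.comp_apply]
    rw [show ((A : V →ₗ[ℝ] V) v) = A v from rfl, hc, map_smul, hαv, smul_eq_mul]
    ring
  have hGGA : (GG ω k α).compLinearMap (fun _ => (A : V →ₗ[ℝ] V)) = GG ω k γ := by
    apply MultilinearMap.ext
    intro x
    rw [MultilinearMap.compLinearMap_apply]
    show GGfun ω k α (fun i => A (x i)) = GGfun ω k γ x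
    rw [GGfun, GGfun]
    congr 1
    exact Finset.prod_congr rfl fun i _ => hA _ _
  have hGGγ : GG ω k γ = c • GG ω k α + GG ω k β := by
    apply MultilinearMap.ext
    intro x
    show GGfun ω k γ x = (c • GG ω k α + GG ω k β) x
    rw [MultilinearMap.add_apply, MultilinearMap.smul_apply]
    show GGfun ω k γ x = c • GGfun ω k α x + GGfun ω k β x
    rw [GGfun, GGfun, GGfun, hβdef]
    simp only [LinearMap.sub_apply, LinearMap.smul_apply, smul_eq_mul]
    ring
  have hβzero : MultilinearMap.alternatization (GG ω k β) = 0 := by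
    rw [← AlternatingMap.map_basis_eq_zero_iff e]
    rw [he]
    rw [alt_apply_eq_Sm]
    exact Sm_eq_zero ω k β t v htlast hrad₁ hrad₁' hβv
  have hFA : F.compLinearMap (A : V →ₗ[ℝ] V) = c • F := by
    rw [hFdef, alt_compLinearMap, hGGA, hGGγ, map_add, alt_smul, hβzero, add_zero]
  -- evaluate everything on the basis
  have hFe : F ⇑e = (2 ^ k * Nat.factorial k : ℝ) := by
    rw [hFdef, he, alt_apply_eq_Sm, eval_std ω α k t htη, htlast, hαv, mul_one]
  have hdet : (F.compLinearMap (A : V →ₗ[ℝ] V)) ⇑e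
      = LinearMap.det (A : V →ₗ[ℝ] V) * F ⇑e := by
    rw [AlternatingMap.compLinearMap_apply]
    conv_lhs => rw [F.eq_smul_basis_det e]
    rw [AlternatingMap.smul_apply, smul_eq_mul]
    rw [show (fun i => (A : V →ₗ[ℝ] V) (e i)) = ((A : V →ₗ[ℝ] V) ∘ ⇑e) from rfl]
    rw [Module.Basis.det_comp, Module.Basis.det_self, mul_one, mul_comm]
  have hcF : (c • F) ⇑e = c * F ⇑e := by
    rw [AlternatingMap.smul_apply, smul_eq_mul]
  have hne : (2 ^ k * Nat.factorial k : ℝ) ≠ 0 := by positivity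
  have hceq : LinearMap.det (A : V →ₗ[ℝ] V) = c := by
    have h1 := hdet
    rw [hFA, hcF, hFe] at h1
    exact (mul_right_cancel₀ hne h1).symm
  rw [hceq, ← hc]
end
end

section
/- Let V be a finite-dimensional real vector space, ω : V × V → ℝ an alternating bilinear form, and v ∈ V a nonzero vector such that the radical of ω equals the line spanned by v; that is, ω(v, y) = 0 for all y ∈ V, and every x ∈ V with ω(x, y) = 0 for all y is a scalar multiple of v. If A : V → V is a linear automorphism with ω(A x, A y) = ω(x, y) for all x, y ∈ V and det A = 1, then A v = v; in particular, 1 is an eigenvalue of A. -/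
open Submodule LinearMap Matrix

theorem det_restrict_mul_det_mapQ {K V : Type*} [Field K] [AddCommGroup V]
    [Module K V] [FiniteDimensional K V] (f : V →ₗ[K] V) (p : Submodule K V)
    (hf : ∀ x ∈ p, f x ∈ p) :
    LinearMap.det f =
      LinearMap.det (f.restrict hf) *
        LinearMap.det (p.mapQ p f (fun x hx => hf x hx)) := by
  classical
  obtain ⟨q, hq⟩ := Submodule.exists_isCompl p
  set e := Submodule.prodEquivOfIsCompl p q hq with he
  set g : (p × q) →ₗ[K] (p × q) :=
    (e.symm : V →ₗ[K] p × q) ∘ₗ f ∘ₗ (e : p × q →ₗ[K] V) with hg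
  have hdetg : LinearMap.det g = LinearMap.det f := by
    rw [hg]
    have := LinearMap.det_conj f e.symm
    simpa using this
  have bp := Module.finBasis K p
  have bq := Module.finBasis K q
  set b := bp.prod bq with hb
  set M := LinearMap.toMatrix b b g with hM
  -- lower-left block is zero
  have h21 : M.toBlocks₂₁ = 0 := by
    ext i j
    simp only [Matrix.toBlocks₂₁, hM, LinearMap.toMatrix_apply, Matrix.of_apply,
      Matrix.zero_apply]
    have hbj : b (Sum.inl j) = ((bp j : p), (0 : q)) := by
      ext
      · simp [hb, Module.Basis.prod_apply_inl_fst]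
      · simp [hb, Module.Basis.prod_apply_inl_snd]
    rw [hbj, Module.Basis.prod_repr_inr]
    have hev : e ((bp j : p), (0 : q)) = (bp j : V) := by
      simp [he, Submodule.coe_prodEquivOfIsCompl']
    have h2 : (g ((bp j : p), (0 : q))).2 = 0 := by
      rw [hg]
      simp only [LinearMap.comp_apply, LinearEquiv.coe_coe]
      rw [Submodule.prodEquivOfIsCompl_symm_apply_snd_eq_zero, hev]
      exact hf _ (bp j).2
    rw [h2]
    simp
  have hsplit : M = Matrix.fromBlocks M.toBlocks₁₁ M.toBlocks₁₂ 0 M.toBlocks₂₂ := by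
    rw [← h21]
    exact (Matrix.fromBlocks_toBlocks M).symm
  have hdetM : M.det = M.toBlocks₁₁.det * M.toBlocks₂₂.det := by
    conv_lhs => rw [hsplit]
    exact Matrix.det_fromBlocks_zero₂₁ _ _ _
  have h11 : M.toBlocks₁₁ = LinearMap.toMatrix bp bp (f.restrict hf) := by
    ext i j
    simp only [Matrix.toBlocks₁₁, hM, LinearMap.toMatrix_apply, Matrix.of_apply]
    have hbj : b (Sum.inl j) = ((bp j : p), (0 : q)) := by
      ext
      · simp [hb, Module.Basis.prod_apply_inl_fst]
      · simp [hb, Module.Basis.prod_apply_inl_snd]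
    have hev : e ((bp j : p), (0 : q)) = (bp j : V) := by
      simp [he, Submodule.coe_prodEquivOfIsCompl']
    rw [hbj, Module.Basis.prod_repr_inl]
    have h1 : (g ((bp j : p), (0 : q))).1 = f.restrict hf (bp j) := by
      rw [hg]
      simp only [LinearMap.comp_apply, LinearEquiv.coe_coe]
      rw [hev]
      have h' := Submodule.prodEquivOfIsCompl_symm_apply_left p q hq
        (⟨f (bp j : V), hf (bp j : V) (bp j).2⟩ : p)
      rw [Submodule.coe_mk] at h'
      rw [h']
      rfl
    rw [h1]
  set g22 : q →ₗ[K] q :=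
    (LinearMap.snd K p q) ∘ₗ g ∘ₗ (LinearMap.inr K p q) with hg22
  have h22 : M.toBlocks₂₂ = LinearMap.toMatrix bq bq g22 := by
    ext i j
    simp only [Matrix.toBlocks₂₂, hM, LinearMap.toMatrix_apply, Matrix.of_apply]
    have hbj : b (Sum.inr j) = ((0 : p), (bq j : q)) := by
      ext
      · simp [hb, Module.Basis.prod_apply_inr_fst]
      · simp [hb, Module.Basis.prod_apply_inr_snd]
    rw [hbj, Module.Basis.prod_repr_inr]
    rfl
  set ψ := (Submodule.quotientEquivOfIsCompl p q hq).symm with hψ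
  have hmapQ : p.mapQ p f (fun x hx => hf x hx) =
      (ψ : q →ₗ[K] V ⧸ p) ∘ₗ g22 ∘ₗ (ψ.symm : (V ⧸ p) →ₗ[K] q) := by
    apply Submodule.linearMap_qext
    ext y
    simp only [LinearMap.comp_apply, Submodule.mkQ_apply, Submodule.mapQ_apply,
      LinearEquiv.coe_coe]
    set z := e.symm y with hz
    have hy : y = (z.1 : V) + (z.2 : V) := by
      have : e z = (z.1 : V) + (z.2 : V) := Submodule.coe_prodEquivOfIsCompl' p q hq z
      rw [← this, hz, e.apply_symm_apply]
    have hmk : Submodule.Quotient.mk (p := p) y = Submodule.Quotient.mk ((z.2 : V)) := by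
      rw [Submodule.Quotient.eq]
      rw [hy]
      simpa using z.1.2
    have hψsymm : ψ.symm (Submodule.Quotient.mk y) = z.2 := by
      rw [hψ, LinearEquiv.symm_symm, hmk]
      exact Submodule.quotientEquivOfIsCompl_apply_mk_coe hq z.2
    rw [hψsymm]
    rw [hψ]
    rw [Submodule.quotientEquivOfIsCompl_symm_apply p q]
    rw [Submodule.Quotient.eq]
    have hge : (g22 z.2 : V) = ((e.symm (f (z.2 : V))).2 : V) := by
      rw [hg22]
      simp only [LinearMap.comp_apply, LinearMap.inr_apply, LinearMap.snd_apply, hg,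
        LinearEquiv.coe_coe]
      congr 2
      have : e ((0 : p), z.2) = ((0:p) : V) + (z.2 : V) :=
        Submodule.coe_prodEquivOfIsCompl' p q hq _
      rw [this]
      simp
    rw [hge]
    have hfz : f (z.2 : V) = ((e.symm (f (z.2 : V))).1 : V) + ((e.symm (f (z.2 : V))).2 : V) := by
      have h' : e (e.symm (f (z.2 : V))) = _ :=
        Submodule.coe_prodEquivOfIsCompl' p q hq (e.symm (f (z.2:V)))
      rw [e.apply_symm_apply] at h'
      exact h'
    have hfy : f y = f (z.1 : V) + f (z.2 : V) := by
      conv_lhs => rw [hy]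
      rw [map_add]
    set w := e.symm (f (z.2 : V)) with hw
    have hyq : f y - (w.2 : V) = f (z.1 : V) + (w.1 : V) := by
      rw [hfy, hfz]
      abel
    rw [hyq]
    exact add_mem (hf _ z.1.2) w.1.2
  have hdet22 : LinearMap.det g22 = LinearMap.det (p.mapQ p f (fun x hx => hf x hx)) := by
    rw [hmapQ]
    exact (LinearMap.det_conj g22 ψ).symm
  calc LinearMap.det f = LinearMap.det g := hdetg.symm
    _ = M.det := (LinearMap.det_toMatrix b g).symm
    _ = M.toBlocks₁₁.det * M.toBlocks₂₂.det := hdetM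
    _ = LinearMap.det (f.restrict hf) * LinearMap.det (p.mapQ p f (fun x hx => hf x hx)) := by
        rw [h11, h22, LinearMap.det_toMatrix, LinearMap.det_toMatrix, hdet22]

universe u

section QuotForm

variable {K V : Type*} [Field K] [AddCommGroup V] [Module K V]

/-- Descend a bilinear form to the quotient by a submodule contained in its radical. -/
noncomputable def quotForm (ω : LinearMap.BilinForm K V) (p : Submodule K V)
    (h1 : ∀ x ∈ p, ∀ y, ω x y = 0) (h2 : ∀ y : V, ∀ x ∈ p, ω y x = 0) :
    LinearMap.BilinForm K (V ⧸ p) :=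
  p.liftQ
    { toFun := fun x => p.liftQ (ω x) (fun z hz => h2 x z hz)
      map_add' := fun x y => by
        apply Submodule.linearMap_qext
        ext z
        simp
        rfl
      map_smul' := fun c x => by
        apply Submodule.linearMap_qext
        ext z
        simp
        exact Or.inl rfl }
    (by
      intro x hx
      apply Submodule.linearMap_qext
      ext z
      simp [h1 x hx]
      exact h1 x hx z)

@[simp] theorem quotForm_apply (ω : LinearMap.BilinForm K V) (p : Submodule K V)
    (h1 : ∀ x ∈ p, ∀ y, ω x y = 0) (h2 : ∀ y : V, ∀ x ∈ p, ω y x = 0) (x y : V) :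
    quotForm ω p h1 h2 (p.mkQ x) (p.mkQ y) = ω x y := rfl

/-- The determinant of the restriction of an endomorphism to the span of an
eigenvector is the eigenvalue. -/
theorem det_restrict_span_singleton [FiniteDimensional K V] (f : V →ₗ[K] V) (x : V) (hx : x ≠ 0)
    (μ : K) (hfx : f x = μ • x) (hinv : ∀ z ∈ (K ∙ x), f z ∈ (K ∙ x)) :
    LinearMap.det (f.restrict hinv) = μ := by
  have hres : f.restrict hinv = μ • LinearMap.id := by
    ext z
    obtain ⟨c, hc⟩ := Submodule.mem_span_singleton.mp z.2
    show (f.restrict hinv z : V) = ((μ • LinearMap.id) z : ↥(K ∙ x))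
    rw [LinearMap.restrict_coe_apply]
    have hz : (z : V) = c • x := hc.symm
    rw [hz]
    simp only [_root_.map_smul, hfx, LinearMap.smul_apply, LinearMap.id_apply]
    rw [smul_comm]
    rw [Submodule.coe_smul, hz]
  rw [hres, LinearMap.det_smul, LinearMap.det_id,
    finrank_span_singleton hx, pow_one, mul_one]

end QuotForm

section AlgClosed

open Module

/-- An endomorphism preserving a nondegenerate alternating bilinear form over an
algebraically closed field has determinant 1. -/
theorem det_eq_one_of_alt_nondeg_isometry {K : Type*} [Field K] [IsAlgClosed K] :
    ∀ (n : ℕ) {W : Type u} [AddCommGroup W] [Module K W] [FiniteDimensional K W]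
    (ω : LinearMap.BilinForm K W), ω.IsAlt → ω.Nondegenerate →
    ∀ f : W →ₗ[K] W, (∀ x y, ω (f x) (f y) = ω x y) →
    Module.finrank K W = n → LinearMap.det f = 1 := by
  intro n
  induction n using Nat.strong_induction_on with
  | _ n ih =>
  intro W _ _ _ ω halt hnd f hf hn
  rcases Nat.eq_zero_or_pos n with hn0 | hnpos
  · subst hn0
    have : Subsingleton W := by
      rw [← Module.finrank_zero_iff (R := K)]
      exact hn
    have hfid : f = LinearMap.id := by
      ext z
      exact Subsingleton.elim _ _
    rw [hfid, LinearMap.det_id]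
  · have hNT : Nontrivial W := by
      rw [← Module.finrank_pos_iff (R := K)]
      omega
    have hinj : ∀ z, f z = 0 → z = 0 := by
      intro z hz
      refine hnd.1 z fun w => ?_
      rw [← hf z w, hz]
      simp
    obtain ⟨μ, hμ⟩ := Module.End.exists_eigenvalue (f : Module.End K W)
    obtain ⟨x, hx⟩ := hμ.exists_hasEigenvector
    have hxne : x ≠ 0 := hx.2
    have hfx : f x = μ • x := hx.apply_eq_smul
    have hμ0 : μ ≠ 0 := by
      rintro rfl
      exact hxne (hinj x (by simp [hfx]))
    -- the invariant hyperplane `H = ker (ω x)`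
    set H : Submodule K W := LinearMap.ker (ω x) with hH
    have hmemH : ∀ z, z ∈ H ↔ ω x z = 0 := by
      intro z; simp [hH, LinearMap.mem_ker]
    have hxH : x ∈ H := (hmemH x).mpr (halt x)
    have hωxf : ∀ z, ω x (f z) = μ⁻¹ * ω x z := by
      intro z
      have h1 : ω (f x) (f z) = ω x z := hf x z
      rw [hfx, _root_.map_smul, LinearMap.smul_apply, smul_eq_mul] at h1
      rw [← h1, ← mul_assoc, inv_mul_cancel₀ hμ0, one_mul]
    have hfH : ∀ z ∈ H, f z ∈ H := by
      intro z hz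
      rw [hmemH] at hz ⊢
      rw [hωxf, hz, mul_zero]
    -- a vector not orthogonal to x
    have hωx0 : ∃ y₀, ω x y₀ ≠ 0 := by
      by_contra hcon
      push_neg at hcon
      exact hxne (hnd.1 x hcon)
    obtain ⟨y₀, hy₀⟩ := hωx0
    -- dimensions
    have hrange : LinearMap.range (ω x) = ⊤ := by
      rw [LinearMap.range_eq_top]
      intro c
      refine ⟨(c / ω x y₀) • y₀, ?_⟩
      rw [_root_.map_smul, smul_eq_mul, div_mul_cancel₀ _ hy₀]
    have hdimH : Module.finrank K H + 1 = n := by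
      have h1 := LinearMap.finrank_range_add_finrank_ker (ω x)
      rw [hrange, finrank_top, finrank_self, hn, ← hH] at h1
      omega
    have hdimWH : Module.finrank K (W ⧸ H) = 1 := by
      have h2 := Submodule.finrank_quotient_add_finrank H
      rw [hn] at h2
      omega
    -- the restricted form and endomorphism
    set ωH : LinearMap.BilinForm K H := ω.restrict H with hωH
    set fH : H →ₗ[K] H := f.restrict hfH with hfHdef
    have hωHapp : ∀ a b : H, ωH a b = ω (a : W) (b : W) := fun a b => rfl
    have hfHapp : ∀ a : H, (fH a : W) = f (a : W) := fun a => rfl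
    have hfHiso : ∀ a b : H, ωH (fH a) (fH b) = ωH a b := by
      intro a b
      rw [hωHapp, hωHapp, hfHapp, hfHapp, hf]
    set xH : H := ⟨x, hxH⟩ with hxHdef
    have hxHne : xH ≠ 0 := by
      intro hcon
      apply hxne
      have := congrArg (Subtype.val) hcon
      exact this
    have hfxH : fH xH = μ • xH := by
      apply Subtype.ext
      rw [hfHapp]
      simpa using hfx
    set p' : Submodule K H := K ∙ xH with hp'
    have hfp' : ∀ z ∈ p', fH z ∈ p' := by
      intro z hz
      rw [hp', Submodule.mem_span_singleton] at hz ⊢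
      obtain ⟨c, rfl⟩ := hz
      refine ⟨c * μ, ?_⟩
      rw [_root_.map_smul, hfxH, smul_smul]
    -- the radical of the restricted form is exactly `p'`
    have hradH : ∀ z : H, (∀ w : H, ωH z w = 0) → z ∈ p' := by
      intro z hz
      have hzw : ∀ w : W, ω (z : W) w = (ω (z : W) y₀ / ω x y₀) * ω x w := by
        intro w
        have hw' : w - (ω x w / ω x y₀) • y₀ ∈ H := by
          rw [hmemH]
          rw [map_sub, _root_.map_smul, smul_eq_mul, div_mul_cancel₀ _ hy₀, sub_self]
        have h0 : ω (z : W) (w - (ω x w / ω x y₀) • y₀) = 0 := by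
          have := hz ⟨_, hw'⟩
          rw [hωHapp] at this
          exact this
        rw [map_sub, _root_.map_smul, smul_eq_mul, sub_eq_zero] at h0
        rw [h0]
        ring
      set c := ω (z : W) y₀ / ω x y₀ with hcdef
      have hzc : (z : W) = c • x := by
        have : (z : W) - c • x = 0 := by
          apply hnd.1
          intro w
          rw [map_sub, _root_.map_smul, LinearMap.sub_apply, LinearMap.smul_apply, smul_eq_mul]
          rw [hzw w]
          ring
        have := sub_eq_zero.mp this
        exact this
      rw [hp', Submodule.mem_span_singleton]
      exact ⟨c, (Subtype.ext (by simpa using hzc.symm))⟩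
    -- the quotient form
    have h1 : ∀ a ∈ p', ∀ b : H, ωH a b = 0 := by
      intro a ha b
      rw [hp', Submodule.mem_span_singleton] at ha
      obtain ⟨c, rfl⟩ := ha
      rw [_root_.map_smul, LinearMap.smul_apply, smul_eq_mul]
      have : ωH xH b = 0 := by
        rw [hωHapp]
        have hb : ω x (b : W) = 0 := (hmemH _).mp b.2
        simpa using hb
      rw [this, mul_zero]
    have haltH : ωH.IsAlt := fun a => by rw [hωHapp]; exact halt _
    have h2 : ∀ b : H, ∀ a ∈ p', ωH b a = 0 := by
      intro b a ha
      have := LinearMap.IsAlt.neg haltH a b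
      rw [h1 a ha b] at this
      rw [← this, neg_zero]
    set ωQ := quotForm ωH p' h1 h2 with hωQ
    have haltQ : ωQ.IsAlt := by
      intro ξ
      obtain ⟨a, rfl⟩ := p'.mkQ_surjective ξ
      rw [hωQ, quotForm_apply]
      exact haltH a
    have hndQ : ωQ.Nondegenerate := by
      refine (LinearMap.BilinForm.IsAlt.isRefl haltQ).nondegenerate_iff_separatingLeft.mpr ?_
      intro ξ hξ
      obtain ⟨a, rfl⟩ := p'.mkQ_surjective ξ
      have : ∀ w : H, ωH a w = 0 := by
        intro w
        have := hξ (p'.mkQ w)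
        rwa [hωQ, quotForm_apply] at this
      have hap' := hradH a this
      rwa [Submodule.mkQ_apply, Submodule.Quotient.mk_eq_zero]
    set fQ := p'.mapQ p' fH (fun z hz => hfp' z hz) with hfQ
    have hfQiso : ∀ ξ η, ωQ (fQ ξ) (fQ η) = ωQ ξ η := by
      intro ξ η
      obtain ⟨a, rfl⟩ := p'.mkQ_surjective ξ
      obtain ⟨b, rfl⟩ := p'.mkQ_surjective η
      exact hfHiso a b
    -- dimension count for the quotient
    have hdimp' : Module.finrank K p' = 1 := finrank_span_singleton hxHne
    have hdimQ : Module.finrank K (H ⧸ p') + 1 = Module.finrank K H := by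
      have := Submodule.finrank_quotient_add_finrank p'
      omega
    have hIH : LinearMap.det fQ = 1 := by
      refine ih (Module.finrank K (H ⧸ p')) (by omega) ωQ haltQ hndQ fQ hfQiso rfl
    -- determinant of fH
    have hdetres : LinearMap.det (fH.restrict hfp') = μ :=
      det_restrict_span_singleton fH xH hxHne μ hfxH hfp'
    have hdetfH : LinearMap.det fH = μ := by
      rw [det_restrict_mul_det_mapQ fH p' hfp', hdetres, ← hfQ, hIH, mul_one]
    -- determinant of the map induced on W ⧸ H
    have hquot : H.mapQ H f (fun z hz => hfH z hz) = μ⁻¹ • LinearMap.id := by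
      apply Submodule.linearMap_qext
      ext y
      simp only [LinearMap.comp_apply, Submodule.mkQ_apply, Submodule.mapQ_apply,
        LinearMap.smul_apply, LinearMap.id_apply]
      rw [← Submodule.Quotient.mk_smul, Submodule.Quotient.eq]
      rw [hmemH]
      rw [map_sub, _root_.map_smul, smul_eq_mul, hωxf, sub_self]
    have hdetquot : LinearMap.det (H.mapQ H f (fun z hz => hfH z hz)) = μ⁻¹ := by
      rw [hquot, LinearMap.det_smul, LinearMap.det_id, hdimWH, pow_one, mul_one]
    rw [det_restrict_mul_det_mapQ f H hfH, hdetfH, hdetquot, mul_inv_cancel₀ hμ0]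

end AlgClosed


/-- Degeneracy criterion, linear-algebra core: if the radical of an alternating bilinear
form `ω` on a finite-dimensional real vector space is the line spanned by a nonzero
vector `v`, then any linear automorphism of determinant `1` preserving `ω` fixes `v`;
in particular `1` is an eigenvalue of `A`. -/
theorem fixes_radical_of_det_one
    {V : Type*} [AddCommGroup V] [Module ℝ V] [FiniteDimensional ℝ V]
    (ω : LinearMap.BilinForm ℝ V)
    (halt : ∀ x : V, ω x x = 0)
    (v : V) (hv : v ≠ 0)
    (hrad₁ : ∀ y : V, ω v y = 0)
    (hrad₂ : ∀ x : V, (∀ y : V, ω x y = 0) → ∃ c : ℝ, x = c • v)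
    (A : V ≃ₗ[ℝ] V)
    (hA : ∀ x y : V, ω (A x) (A y) = ω x y)
    (hdet : LinearMap.det (A : V →ₗ[ℝ] V) = 1) :
    A v = v ∧ Module.End.HasEigenvalue (A : V →ₗ[ℝ] V) 1 := by
  classical
  set Al : V →ₗ[ℝ] V := (A : V →ₗ[ℝ] V) with hAl
  have hωalt : ω.IsAlt := halt
  -- `A v` belongs to the radical, hence is a multiple of `v`
  have hAvrad : ∀ y : V, ω (A v) y = 0 := by
    intro y
    have h1 := hA v (A.symm y)
    rw [A.apply_symm_apply] at h1
    rw [h1]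
    exact hrad₁ _
  obtain ⟨c, hc⟩ := hrad₂ (A v) hAvrad
  have hAvne : A v ≠ 0 := by
    intro h
    exact hv (by simpa using congrArg A.symm h)
  have hc0 : c ≠ 0 := by
    rintro rfl
    rw [zero_smul] at hc
    exact hAvne hc
  -- the invariant line
  set p : Submodule ℝ V := ℝ ∙ v with hp
  have hAp : ∀ x ∈ p, Al x ∈ p := by
    intro x hx
    rw [hp, Submodule.mem_span_singleton] at hx ⊢
    obtain ⟨a, rfl⟩ := hx
    refine ⟨a * c, ?_⟩
    have : Al (a • v) = a • (A v) := by simp [hAl]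
    rw [this, hc, smul_smul]
  have hAlv : Al v = c • v := hc
  have hdetres : LinearMap.det (Al.restrict hAp) = c :=
    det_restrict_span_singleton Al v hv c hAlv hAp
  -- the quotient form
  have h1 : ∀ x ∈ p, ∀ y, ω x y = 0 := by
    intro x hx y
    rw [hp, Submodule.mem_span_singleton] at hx
    obtain ⟨a, rfl⟩ := hx
    rw [_root_.map_smul, LinearMap.smul_apply, smul_eq_mul, hrad₁ y, mul_zero]
  have h2 : ∀ y : V, ∀ x ∈ p, ω y x = 0 := by
    intro y x hx
    have := LinearMap.IsAlt.neg hωalt x y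
    rw [h1 x hx y] at this
    rw [← this, neg_zero]
  set ωQ := quotForm ω p h1 h2 with hωQ
  have haltQ : ωQ.IsAlt := by
    intro ξ
    obtain ⟨a, rfl⟩ := p.mkQ_surjective ξ
    exact halt a
  have hndQ : ωQ.Nondegenerate := by
    refine (LinearMap.BilinForm.IsAlt.isRefl haltQ).nondegenerate_iff_separatingLeft.mpr ?_
    intro ξ hξ
    obtain ⟨a, rfl⟩ := p.mkQ_surjective ξ
    have ha : ∀ y : V, ω a y = 0 := by
      intro y
      have := hξ (p.mkQ y)
      rwa [hωQ, quotForm_apply] at this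
    obtain ⟨d, hd⟩ := hrad₂ a ha
    rw [Submodule.mkQ_apply, Submodule.Quotient.mk_eq_zero, hd, hp]
    exact Submodule.smul_mem _ d (Submodule.mem_span_singleton_self v)
  set AQ := p.mapQ p Al (fun x hx => hAp x hx) with hAQ
  have hAQiso : ∀ ξ η, ωQ (AQ ξ) (AQ η) = ωQ ξ η := by
    intro ξ η
    obtain ⟨a, rfl⟩ := p.mkQ_surjective ξ
    obtain ⟨b, rfl⟩ := p.mkQ_surjective η
    exact hA a b
  -- transfer to matrices over ℂ
  set b := Module.finBasis ℝ (V ⧸ p) with hb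
  set S := LinearMap.toMatrix b b AQ with hS
  set M := BilinForm.toMatrix b ωQ with hM
  have hcomp : ωQ.comp AQ AQ = ωQ := by
    apply LinearMap.ext
    intro ξ
    apply LinearMap.ext
    intro η
    rw [BilinForm.comp_apply]
    exact hAQiso ξ η
  have hSMS : Sᵀ * M * S = M := by
    have h3 := BilinForm.toMatrix_comp b b ωQ AQ AQ
    rw [hcomp] at h3
    rw [hM, hS]
    exact h3.symm
  have hMdet : M.det ≠ 0 := by
    rw [hM]
    exact (BilinForm.nondegenerate_iff_det_ne_zero b).mp hndQ
  have hMskew : Mᵀ = -M := by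
    ext i j
    rw [Matrix.transpose_apply, Matrix.neg_apply, hM]
    exact (LinearMap.BilinForm.toMatrix_apply b ωQ j i).trans
      ((LinearMap.IsAlt.neg haltQ (b i) (b j)).symm.trans
        (congrArg Neg.neg (LinearMap.BilinForm.toMatrix_apply b ωQ i j).symm))
  set r : ℝ →+* ℂ := algebraMap ℝ ℂ with hr
  set Sc := S.map r with hSc
  set Mc := M.map r with hMc
  have hSMSc : Scᵀ * Mc * Sc = Mc := by
    rw [hSc, hMc, ← Matrix.transpose_map, ← Matrix.map_mul, ← Matrix.map_mul, hSMS]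
  have hMcskew : Mcᵀ = -Mc := by
    rw [hMc, ← Matrix.transpose_map, hMskew]
    ext i j
    simp [Matrix.map_apply]
  have hMcdet : Mc.det ≠ 0 := by
    have hmapdet : Mc.det = r M.det := by
      rw [hMc, ← RingHom.mapMatrix_apply, ← RingHom.map_det]
    rw [hmapdet]
    intro h0
    exact hMdet (r.injective (by rw [h0, _root_.map_zero]))
  set ωC := Matrix.toBilin' Mc with hωC
  set fC := Matrix.toLin' Sc with hfC
  have haltC : ωC.IsAlt := by
    intro z
    have hz1 : ωC z z = dotProduct z (Mc *ᵥ z) := Matrix.toBilin'_apply' _ _ _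
    have hz2 : dotProduct z (Mc *ᵥ z) = - dotProduct z (Mc *ᵥ z) := by
      calc dotProduct z (Mc *ᵥ z) = dotProduct (z ᵥ* Mc) z :=
            Matrix.dotProduct_mulVec z Mc z
        _ = dotProduct (Mcᵀ *ᵥ z) z := by rw [Matrix.mulVec_transpose]
        _ = dotProduct ((-Mc) *ᵥ z) z := by rw [hMcskew]
        _ = - dotProduct (Mc *ᵥ z) z := by
            rw [Matrix.neg_mulVec, neg_dotProduct]
        _ = - dotProduct z (Mc *ᵥ z) := by rw [dotProduct_comm]
    rw [hz1]
    linear_combination hz2 / 2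
  have hndC : ωC.Nondegenerate := by
    rw [hωC]
    exact BilinForm.nondegenerate_toBilin'_iff_det_ne_zero.mpr hMcdet
  have hcompC : ωC.comp fC fC = ωC := by
    rw [hωC, hfC, Matrix.toBilin'_comp, hSMSc]
  have hisoC : ∀ z w, ωC (fC z) (fC w) = ωC z w := by
    intro z w
    conv_rhs => rw [← hcompC]
    rfl
  have hdetC : LinearMap.det fC = 1 :=
    det_eq_one_of_alt_nondeg_isometry _ ωC haltC hndC fC hisoC rfl
  have hdetSc : Sc.det = 1 := by
    rw [← LinearMap.det_toLin' Sc]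
    exact hdetC
  have hdetS : S.det = 1 := by
    have h4 : Sc.det = r S.det := by
      rw [hSc, ← RingHom.mapMatrix_apply, ← RingHom.map_det]
    apply r.injective
    rw [← h4, hdetSc, _root_.map_one]
  have hdetAQ : LinearMap.det AQ = 1 := by
    rw [← LinearMap.det_toMatrix b AQ, ← hS]
    exact hdetS
  have hdetsplit := det_restrict_mul_det_mapQ Al p hAp
  rw [hdetres, ← hAQ, hdetAQ, mul_one] at hdetsplit
  have hc1 : c = 1 := by
    rw [← hdetsplit]
    rw [← hdet, hAl]
  have hAvv : A v = v := by rw [hc, hc1, one_smul]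
  refine ⟨hAvv, ?_⟩
  have hev : Module.End.HasEigenvector (A : V →ₗ[ℝ] V) 1 v := by
    constructor
    · rw [Module.End.mem_eigenspace_iff, one_smul]
      exact hAvv
    · exact hv
  exact Module.End.hasEigenvalue_of_hasEigenvector hev
end

section
/- Let (f_c)_{c ∈ [0,1]} be a family of lifts of degree-one circle maps (monotone maps ℝ → ℝ commuting with translation by 1) such that each f_c : ℝ → ℝ is continuous, and the family is uniformly continuous in the parameter: for every ε > 0 there is δ > 0 such that for all c, c' ∈ [0,1] with |c − c'| ≤ δ one has |f_c(x) − f_{c'}(x)| ≤ ε for all x ∈ ℝ. If the translation numbers satisfy τ(f_0) ≠ τ(f_1), then there exist c ∈ [0,1], a point x ∈ ℝ, an integer n ≥ 1 and m ∈ ℤ such that f_c^{n}(x) = x + m; that is, the circle map induced by f_c has a periodic orbit. -/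
open Set

/-- Iterates of maps uniformly close to a fixed continuous map stay close at a point. -/
lemma iterate_close (f : ℝ → ℝ) (hf : Continuous f) (x₀ : ℝ) (n : ℕ) :
    ∀ η > (0:ℝ), ∃ ε > (0:ℝ), ∀ g : ℝ → ℝ,
      (∀ x, |g x - f x| ≤ ε) → |g^[n] x₀ - f^[n] x₀| ≤ η := by
  induction n with
  | zero => intro η hη; exact ⟨η, hη, fun g _ => by simp [le_of_lt hη]⟩
  | succ n ih =>
    intro η hη
    have hc : ContinuousAt f (f^[n] x₀) := hf.continuousAt
    rcases Metric.continuousAt_iff.1 hc (η/2) (by linarith) with ⟨ζ, hζ0, hζ⟩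
    rcases ih (ζ/2) (by linarith) with ⟨ε₁, hε₁0, hε₁⟩
    refine ⟨min ε₁ (η/2), lt_min hε₁0 (by linarith), fun g hg => ?_⟩
    have hg₁ : ∀ x, |g x - f x| ≤ ε₁ := fun x => (hg x).trans (min_le_left _ _)
    have h1 : |g^[n] x₀ - f^[n] x₀| ≤ ζ/2 := hε₁ g hg₁
    have h2 : |f (g^[n] x₀) - f (f^[n] x₀)| ≤ η/2 := by
      have : dist (g^[n] x₀) (f^[n] x₀) < ζ := by
        rw [Real.dist_eq]; linarith
      have := hζ this
      rw [Real.dist_eq] at this; linarith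
    have h3 : |g (g^[n] x₀) - f (g^[n] x₀)| ≤ η/2 :=
      (hg _).trans (min_le_right _ _)
    rw [Function.iterate_succ_apply', Function.iterate_succ_apply']
    calc |g (g^[n] x₀) - f (f^[n] x₀)|
        ≤ |g (g^[n] x₀) - f (g^[n] x₀)| + |f (g^[n] x₀) - f (f^[n] x₀)| := abs_sub_le _ _ _
      _ ≤ η/2 + η/2 := add_le_add h3 h2
      _ = η := by ring

theorem helper_lt
    (F : ℝ → CircleDeg1Lift)
    (hcont : ∀ c ∈ Set.Icc (0 : ℝ) 1, Continuous (F c))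
    (hunif : ∀ ε > (0 : ℝ), ∃ δ > (0 : ℝ),
      ∀ c ∈ Set.Icc (0 : ℝ) 1, ∀ c' ∈ Set.Icc (0 : ℝ) 1,
        |c - c'| ≤ δ → ∀ x : ℝ, |F c x - F c' x| ≤ ε)
    (hτ : (F 0).translationNumber < (F 1).translationNumber) :
    ∃ c ∈ Set.Icc (0 : ℝ) 1, ∃ x : ℝ, ∃ n : ℕ, 1 ≤ n ∧ ∃ m : ℤ,
      ((F c) ^ n) x = x + m := by
  by_contra hper
  push_neg at hper
  obtain ⟨q, hq0, hq1⟩ := exists_rat_btwn hτ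
  set n : ℕ := q.den with hn_def
  set m : ℤ := q.num with hm_def
  have hn : 0 < n := q.pos
  have hq_eq : (q : ℝ) = (m : ℝ) / (n : ℝ) := by
    rw [Rat.cast_def]
  -- no member of the family has translation number q
  have hne : ∀ c ∈ Icc (0:ℝ) 1, (F c).translationNumber ≠ (q : ℝ) := by
    intro c hc h
    rw [hq_eq] at h
    obtain ⟨x, hx⟩ := ((F c).translationNumber_eq_rat_iff (hcont c hc) hn).1 h
    exact hper c hc x n hn m hx
  -- relative openness of {τ < q}
  have openA : ∀ c ∈ Icc (0:ℝ) 1, (F c).translationNumber < q →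
      ∃ δ > (0:ℝ), ∀ c' ∈ Icc (0:ℝ) 1, |c - c'| ≤ δ →
        (F c').translationNumber < q := by
    intro c hc hlt
    have hpow : ((F c) ^ n).translationNumber < (m : ℝ) := by
      rw [CircleDeg1Lift.translationNumber_pow]
      rw [hq_eq, lt_div_iff₀ (by exact_mod_cast hn : (0:ℝ) < (n:ℝ))] at hlt
      linarith [hlt]
    obtain ⟨x₀, hx₀⟩ : ∃ x₀ : ℝ, ((F c) ^ n) x₀ < x₀ + m := by
      by_contra h
      push_neg at h
      exact absurd (((F c) ^ n).le_translationNumber_of_add_int_le (h 0)) (not_le.2 hpow)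
    have hη : (0:ℝ) < x₀ + m - ((F c) ^ n) x₀ := by linarith
    obtain ⟨ε, hε0, hε⟩ := iterate_close (F c) (hcont c hc) x₀ n
      ((x₀ + m - ((F c) ^ n) x₀)/2) (by linarith)
    obtain ⟨δ, hδ0, hδ⟩ := hunif ε hε0
    refine ⟨δ, hδ0, fun c' hc' hcc' => ?_⟩
    have hclose : ∀ x, |(F c') x - (F c) x| ≤ ε := by
      intro x
      have := hδ c hc c' hc' hcc' x
      rwa [abs_sub_comm] at this
    have hiter := hε (F c') hclose
    have hlt' : ((F c') ^ n) x₀ ≤ x₀ + m := by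
      rw [CircleDeg1Lift.coe_pow] at *
      have := abs_sub_le_iff.1 hiter
      linarith [this.1, this.2, hx₀]
    have h1 : ((F c') ^ n).translationNumber ≤ (m:ℝ) :=
      ((F c') ^ n).translationNumber_le_of_le_add_int hlt'
    rw [CircleDeg1Lift.translationNumber_pow] at h1
    have h2 : (F c').translationNumber ≤ (q:ℝ) := by
      rw [hq_eq, le_div_iff₀ (by exact_mod_cast hn : (0:ℝ) < (n:ℝ))]
      linarith
    exact lt_of_le_of_ne h2 (hne c' hc')
  -- relative openness of {τ > q}
  have openB : ∀ c ∈ Icc (0:ℝ) 1, (q : ℝ) < (F c).translationNumber →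
      ∃ δ > (0:ℝ), ∀ c' ∈ Icc (0:ℝ) 1, |c - c'| ≤ δ →
        (q : ℝ) < (F c').translationNumber := by
    intro c hc hlt
    have hpow : (m : ℝ) < ((F c) ^ n).translationNumber := by
      rw [CircleDeg1Lift.translationNumber_pow]
      rw [hq_eq, div_lt_iff₀ (by exact_mod_cast hn : (0:ℝ) < (n:ℝ))] at hlt
      linarith [hlt]
    obtain ⟨x₀, hx₀⟩ : ∃ x₀ : ℝ, x₀ + m < ((F c) ^ n) x₀ := by
      by_contra h
      push_neg at h
      have : ((F c) ^ n).translationNumber ≤ (m:ℝ) :=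
        ((F c) ^ n).translationNumber_le_of_le_add fun x => by
          have := h x; linarith
      exact absurd this (not_le.2 hpow)
    have hη : (0:ℝ) < ((F c) ^ n) x₀ - (x₀ + m) := by linarith
    obtain ⟨ε, hε0, hε⟩ := iterate_close (F c) (hcont c hc) x₀ n
      ((((F c) ^ n) x₀ - (x₀ + m))/2) (by linarith)
    obtain ⟨δ, hδ0, hδ⟩ := hunif ε hε0
    refine ⟨δ, hδ0, fun c' hc' hcc' => ?_⟩
    have hclose : ∀ x, |(F c') x - (F c) x| ≤ ε := by
      intro x
      have := hδ c hc c' hc' hcc' x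
      rwa [abs_sub_comm] at this
    have hiter := hε (F c') hclose
    have hlt' : x₀ + m ≤ ((F c') ^ n) x₀ := by
      rw [CircleDeg1Lift.coe_pow] at *
      have := abs_sub_le_iff.1 hiter
      linarith [this.1, this.2, hx₀]
    have h1 : (m:ℝ) ≤ ((F c') ^ n).translationNumber :=
      ((F c') ^ n).le_translationNumber_of_add_int_le hlt'
    rw [CircleDeg1Lift.translationNumber_pow] at h1
    have h2 : (q:ℝ) ≤ (F c').translationNumber := by
      rw [hq_eq, div_le_iff₀ (by exact_mod_cast hn : (0:ℝ) < (n:ℝ))]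
      linarith
    exact lt_of_le_of_ne h2 (Ne.symm (hne c' hc'))
  -- sSup argument
  set S : Set ℝ := {c | c ∈ Icc (0:ℝ) 1 ∧ (F c).translationNumber < q} with hS_def
  have h0S : (0:ℝ) ∈ S := ⟨⟨le_refl 0, zero_le_one⟩, hq0⟩
  have hbdd : BddAbove S := ⟨1, fun c hc => hc.1.2⟩
  set s := sSup S with hs_def
  have hs0 : (0:ℝ) ≤ s := le_csSup hbdd h0S
  have hs1 : s ≤ 1 := csSup_le ⟨0, h0S⟩ fun c hc => hc.1.2
  have hsI : s ∈ Icc (0:ℝ) 1 := ⟨hs0, hs1⟩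
  rcases (hne s hsI).lt_or_gt with hlt | hgt
  · -- τ (F s) < q : can push right, contradicting sup
    have hs_lt_1 : s < 1 := by
      rcases lt_or_eq_of_le hs1 with h | h
      · exact h
      · exact absurd (h ▸ hlt) (not_lt.2 (le_of_lt hq1))
    obtain ⟨δ, hδ0, hδ⟩ := openA s hsI hlt
    set c' := min (s + δ) 1 with hc'_def
    have hc'I : c' ∈ Icc (0:ℝ) 1 :=
      ⟨le_min (by linarith) zero_le_one, min_le_right _ _⟩
    have hsc' : s < c' := lt_min (by linarith) hs_lt_1
    have habs : |s - c'| ≤ δ := by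
      rw [abs_sub_comm, abs_of_nonneg (by linarith)]
      have : c' ≤ s + δ := min_le_left _ _
      linarith
    have : c' ∈ S := ⟨hc'I, hδ c' hc'I habs⟩
    exact absurd (le_csSup hbdd this) (not_le.2 hsc')
  · -- τ (F s) > q : s - δ is an upper bound, contradiction
    obtain ⟨δ, hδ0, hδ⟩ := openB s hsI hgt
    have hub : ∀ c ∈ S, c ≤ s - δ := by
      intro c hc
      by_contra h
      push_neg at h
      have hcs : c ≤ s := le_csSup hbdd hc
      have habs : |s - c| ≤ δ := by
        rw [abs_of_nonneg (by linarith)]; linarith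
      exact absurd (hδ c hc.1 habs) (not_lt.2 (le_of_lt hc.2))
    have : s ≤ s - δ := csSup_le ⟨0, h0S⟩ hub
    linarith

/-- In a continuous family of lifts of degree-one circle maps whose translation numbers
at the endpoints differ, some member of the family has a periodic orbit: there are a
parameter `c`, a point `x`, `n ≥ 1` and `m : ℤ` with `f_c^[n] x = x + m`. -/
theorem exists_periodic_of_translationNumber_ne
    (F : ℝ → CircleDeg1Lift)
    (hcont : ∀ c ∈ Set.Icc (0 : ℝ) 1, Continuous (F c))
    (hunif : ∀ ε > (0 : ℝ), ∃ δ > (0 : ℝ),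
      ∀ c ∈ Set.Icc (0 : ℝ) 1, ∀ c' ∈ Set.Icc (0 : ℝ) 1,
        |c - c'| ≤ δ → ∀ x : ℝ, |F c x - F c' x| ≤ ε)
    (hτ : (F 0).translationNumber ≠ (F 1).translationNumber) :
    ∃ c ∈ Set.Icc (0 : ℝ) 1, ∃ x : ℝ, ∃ n : ℕ, 1 ≤ n ∧ ∃ m : ℤ,
      ((F c) ^ n) x = x + m := by
  rcases hτ.lt_or_gt with h | h
  · exact helper_lt F hcont hunif h
  · -- apply helper to the reversed family
    have key := helper_lt (fun c => F (1 - c))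
      (fun c hc => hcont (1 - c) ⟨by linarith [hc.2], by linarith [hc.1]⟩)
      (fun ε hε => by
        obtain ⟨δ, hδ0, hδ⟩ := hunif ε hε
        refine ⟨δ, hδ0, fun c hc c' hc' hcc' x => ?_⟩
        have h1 : (1:ℝ) - c ∈ Icc (0:ℝ) 1 := ⟨by linarith [hc.2], by linarith [hc.1]⟩
        have h2 : (1:ℝ) - c' ∈ Icc (0:ℝ) 1 := ⟨by linarith [hc'.2], by linarith [hc'.1]⟩
        have h3 : |(1 - c) - (1 - c')| ≤ δ := by
          rw [show (1 - c) - (1 - c') = -(c - c') by ring, abs_neg]; exact hcc'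
        exact hδ (1 - c) h1 (1 - c') h2 h3 x)
      (by simpa using h)
    obtain ⟨c, hc, x, n, hn, m, hm⟩ := key
    exact ⟨1 - c, ⟨by linarith [hc.2], by linarith [hc.1]⟩, x, n, hn, m, hm⟩
end

section
/- Let (f_c)_{c ∈ [0,1]} be a family of lifts of degree-one circle maps (monotone maps ℝ → ℝ commuting with translation by 1) such that each f_c : ℝ → ℝ is continuous, and the family is uniformly continuous in the parameter: for every ε > 0 there is δ > 0 such that for all c, c' ∈ [0,1] with |c − c'| ≤ δ one has |f_c(x) − f_{c'}(x)| ≤ ε for all x ∈ ℝ. If τ(f_0) ≠ τ(f_1), then the set of parameters c ∈ [0,1] for which there exist x ∈ ℝ, an integer n ≥ 1 and m ∈ ℤ with f_c^{n}(x) = x + m is infinite. -/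
open CircleDeg1Lift Set

/-- Perturbed map `x ↦ ε + f (ε + x)` as a `CircleDeg1Lift`. -/
noncomputable def pert (f : CircleDeg1Lift) (ε : ℝ) : CircleDeg1Lift :=
  ↑(translate (Multiplicative.ofAdd ε)) * f * ↑(translate (Multiplicative.ofAdd ε))

lemma pert_apply (f : CircleDeg1Lift) (ε x : ℝ) : pert f ε x = ε + f (ε + x) := rfl

lemma pert_zero (f : CircleDeg1Lift) : pert f 0 = f := by
  ext x; simp [pert_apply]

lemma continuous_pert_pow_zero (f : CircleDeg1Lift) (hf : Continuous f) (n : ℕ) :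
    Continuous fun ε : ℝ => ((pert f ε) ^ n) 0 := by
  induction n with
  | zero => simpa using continuous_const
  | succ k ih =>
      have : (fun ε : ℝ => ((pert f ε) ^ (k+1)) 0)
          = fun ε : ℝ => ε + f (ε + ((pert f ε) ^ k) 0) := by
        funext ε
        rw [pow_succ']
        rfl
      rw [this]
      exact continuous_id.add (hf.comp (continuous_id.add ih))

lemma tau_lt_of_close (f : CircleDeg1Lift) (hf : Continuous f) {r : ℝ}
    (h : f.translationNumber < r) :
    ∃ ε > (0:ℝ), ∀ g : CircleDeg1Lift, (∀ x, g x ≤ f x + ε) → g.translationNumber < r := by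
  obtain ⟨q, hq1, hq2⟩ := exists_rat_btwn h
  set n : ℕ := q.den with hn
  set p : ℤ := q.num with hp
  have hn0 : (0:ℝ) < n := by exact_mod_cast q.pos
  have hcast : (q : ℝ) = (p : ℝ) / (n : ℝ) := by rw [Rat.cast_def]
  -- τ (f^n) < p
  have hfn : (f ^ n).translationNumber < (p : ℝ) := by
    rw [translationNumber_pow]
    calc (n : ℝ) * f.translationNumber < n * q := by
          exact mul_lt_mul_of_pos_left hq1 hn0
      _ = p := by rw [hcast]; field_simp
  have h0 : ((f ^ n)) 0 < (0:ℝ) + p := (f ^ n).map_lt_of_translationNumber_lt_int hfn 0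
  -- find ε
  have hΦ : Continuous fun ε : ℝ => ((pert f ε) ^ n) 0 := continuous_pert_pow_zero f hf n
  have h0' : ((pert f 0) ^ n) 0 < (0:ℝ) + p := by rwa [pert_zero]
  have hopen : IsOpen {ε : ℝ | ((pert f ε) ^ n) 0 < (0:ℝ) + p} :=
    isOpen_lt hΦ continuous_const
  rcases Metric.isOpen_iff.1 hopen 0 h0' with ⟨ρ, hρ0, hball⟩
  refine ⟨ρ/2, by linarith, fun g hg => ?_⟩
  have hmem : ((pert f (ρ/2)) ^ n) 0 < (0:ℝ) + p := by
    apply hball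
    simp only [Metric.mem_ball, Real.dist_eq, sub_zero]
    rw [abs_of_pos (by linarith)]; linarith
  -- g ≤ pert f (ρ/2)
  have hle : g ≤ pert f (ρ/2) := by
    intro x
    rw [pert_apply]
    calc g x ≤ f x + ρ/2 := hg x
      _ ≤ f (ρ/2 + x) + ρ/2 :=
          add_le_add_left (f.monotone (by linarith)) _
      _ = ρ/2 + f (ρ/2 + x) := add_comm _ _
  have hgn : ((g ^ n)) 0 ≤ (0:ℝ) + p := le_of_lt (lt_of_le_of_lt (pow_mono hle n 0) hmem)
  have : (g ^ n).translationNumber ≤ (p : ℝ) := (g ^ n).translationNumber_le_of_le_add_int hgn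
  rw [translationNumber_pow] at this
  calc g.translationNumber ≤ (p : ℝ) / n := by
        rw [le_div_iff₀ hn0, mul_comm]; exact this
    _ = q := hcast.symm
    _ < r := hq2

lemma lt_tau_of_close (f : CircleDeg1Lift) (hf : Continuous f) {r : ℝ}
    (h : r < f.translationNumber) :
    ∃ ε > (0:ℝ), ∀ g : CircleDeg1Lift, (∀ x, f x - ε ≤ g x) → r < g.translationNumber := by
  obtain ⟨q, hq1, hq2⟩ := exists_rat_btwn h
  set n : ℕ := q.den with hn
  set p : ℤ := q.num with hp
  have hn0 : (0:ℝ) < n := by exact_mod_cast q.pos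
  have hcast : (q : ℝ) = (p : ℝ) / (n : ℝ) := by rw [Rat.cast_def]
  have hfn : (p : ℝ) < (f ^ n).translationNumber := by
    rw [translationNumber_pow]
    calc (p : ℝ) = n * q := by rw [hcast]; field_simp
      _ < n * f.translationNumber := mul_lt_mul_of_pos_left hq2 hn0
  have h0 : (0:ℝ) + p < ((f ^ n)) 0 := (f ^ n).lt_map_of_int_lt_translationNumber hfn 0
  have hΦ : Continuous fun ε : ℝ => ((pert f (-ε)) ^ n) 0 :=
    (continuous_pert_pow_zero f hf n).comp continuous_neg
  have h0' : (0:ℝ) + p < ((pert f (-0)) ^ n) 0 := by rwa [neg_zero, pert_zero]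
  have hopen : IsOpen {ε : ℝ | (0:ℝ) + p < ((pert f (-ε)) ^ n) 0} :=
    isOpen_lt continuous_const hΦ
  rcases Metric.isOpen_iff.1 hopen 0 h0' with ⟨ρ, hρ0, hball⟩
  refine ⟨ρ/2, by linarith, fun g hg => ?_⟩
  have hmem : (0:ℝ) + p < ((pert f (-(ρ/2))) ^ n) 0 := by
    apply hball
    simp only [Metric.mem_ball, Real.dist_eq, sub_zero]
    rw [abs_of_pos (by linarith)]; linarith
  have hle : pert f (-(ρ/2)) ≤ g := by
    intro x
    rw [pert_apply]
    calc -(ρ/2) + f (-(ρ/2) + x) ≤ -(ρ/2) + f x :=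
          add_le_add_right (f.monotone (by linarith)) _
      _ = f x - ρ/2 := by ring
      _ ≤ g x := hg x
  have hgn : (0:ℝ) + p ≤ ((g ^ n)) 0 := le_of_lt (lt_of_lt_of_le hmem (pow_mono hle n 0))
  have : (p : ℝ) ≤ (g ^ n).translationNumber := (g ^ n).le_translationNumber_of_add_int_le hgn
  rw [translationNumber_pow] at this
  calc r < q := hq1
    _ = (p : ℝ) / n := hcast
    _ ≤ g.translationNumber := by rw [div_le_iff₀ hn0, mul_comm]; exact this

lemma exists_param_eq (F : ℝ → CircleDeg1Lift)
    (hcont : ∀ c ∈ Set.Icc (0 : ℝ) 1, Continuous (F c))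
    (hunif : ∀ ε > (0 : ℝ), ∃ δ > (0 : ℝ),
      ∀ c ∈ Set.Icc (0 : ℝ) 1, ∀ c' ∈ Set.Icc (0 : ℝ) 1,
        |c - c'| ≤ δ → ∀ x : ℝ, |F c x - F c' x| ≤ ε)
    {r : ℝ} (h0 : (F 0).translationNumber < r) (h1 : r < (F 1).translationNumber) :
    ∃ c ∈ Set.Icc (0:ℝ) 1, (F c).translationNumber = r := by
  set S : Set ℝ := {c ∈ Set.Icc (0:ℝ) 1 | (F c).translationNumber < r} with hS
  have h0mem : (0:ℝ) ∈ S := ⟨⟨le_refl 0, zero_le_one⟩, h0⟩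
  have hSne : S.Nonempty := ⟨0, h0mem⟩
  have hSbdd : BddAbove S := ⟨1, fun c hc => hc.1.2⟩
  set c₀ : ℝ := sSup S with hc₀
  have hc₀0 : (0:ℝ) ≤ c₀ := le_csSup hSbdd h0mem
  have hc₀1 : c₀ ≤ 1 := csSup_le hSne fun c hc => hc.1.2
  have hc₀mem : c₀ ∈ Set.Icc (0:ℝ) 1 := ⟨hc₀0, hc₀1⟩
  refine ⟨c₀, hc₀mem, ?_⟩
  rcases lt_trichotomy (F c₀).translationNumber r with hlt | heq | hgt
  · -- impossible: some c slightly larger is in S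
    exfalso
    have hc₀ne1 : c₀ ≠ 1 := by
      intro he
      rw [he] at hlt
      exact absurd hlt (not_lt.2 h1.le)
    have hc₀lt1 : c₀ < 1 := lt_of_le_of_ne hc₀1 hc₀ne1
    obtain ⟨ε, hε, hclose⟩ := tau_lt_of_close (F c₀) (hcont c₀ hc₀mem) hlt
    obtain ⟨δ, hδ, hδclose⟩ := hunif ε hε
    set c := min (c₀ + δ) 1 with hc
    have hcIcc : c ∈ Set.Icc (0:ℝ) 1 := ⟨le_min (by linarith) zero_le_one, min_le_right _ _⟩
    have hcgt : c₀ < c := lt_min (by linarith) hc₀lt1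
    have habs : |c - c₀| ≤ δ := by
      rw [abs_of_pos (by linarith)]
      have : c ≤ c₀ + δ := min_le_left _ _
      linarith
    have hball := hδclose c hcIcc c₀ hc₀mem habs
    have : (F c).translationNumber < r := by
      apply hclose
      intro x
      have := hball x
      have := abs_le.1 this
      linarith [this.2]
    have : c ≤ c₀ := le_csSup hSbdd ⟨hcIcc, this⟩
    linarith
  · exact heq
  · -- impossible: everything in S is ≤ c₀ - δ
    exfalso
    have hc₀ne0 : c₀ ≠ 0 := by
      intro he
      rw [he] at hgt
      exact absurd hgt (not_lt.2 h0.le)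
    obtain ⟨ε, hε, hclose⟩ := lt_tau_of_close (F c₀) (hcont c₀ hc₀mem) hgt
    obtain ⟨δ, hδ, hδclose⟩ := hunif ε hε
    have hub : ∀ c ∈ S, c ≤ c₀ - δ := by
      intro c hc
      by_contra hcon
      push_neg at hcon
      have hcle : c ≤ c₀ := le_csSup hSbdd hc
      have habs : |c - c₀| ≤ δ := by
        rw [abs_sub_comm, abs_of_nonneg (by linarith)]
        linarith
      have hball := hδclose c hc.1 c₀ hc₀mem habs
      have : r < (F c).translationNumber := by
        apply hclose
        intro x
        have := abs_le.1 (hball x)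
        linarith [this.1]
      exact absurd hc.2 (not_lt.2 this.le)
    have : c₀ ≤ c₀ - δ := csSup_le hSne hub
    linarith

lemma aux_infinite (F : ℝ → CircleDeg1Lift)
    (hcont : ∀ c ∈ Set.Icc (0 : ℝ) 1, Continuous (F c))
    (hunif : ∀ ε > (0 : ℝ), ∃ δ > (0 : ℝ),
      ∀ c ∈ Set.Icc (0 : ℝ) 1, ∀ c' ∈ Set.Icc (0 : ℝ) 1,
        |c - c'| ≤ δ → ∀ x : ℝ, |F c x - F c' x| ≤ ε)
    (hτ : (F 0).translationNumber < (F 1).translationNumber) :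
    {c ∈ Set.Icc (0 : ℝ) 1 | ∃ x : ℝ, ∃ n : ℕ, 1 ≤ n ∧ ∃ m : ℤ,
      ((F c) ^ n) x = x + m}.Infinite := by
  obtain ⟨q0, h00, h01⟩ := exists_rat_btwn hτ
  obtain ⟨q1, h10, h11⟩ := exists_rat_btwn h01
  have hq01 : q0 < q1 := by exact_mod_cast h10
  set rr : ℕ → ℚ := fun k => q0 + (q1 - q0) / (k + 1) with hrr
  have hrange : ∀ k : ℕ, (F 0).translationNumber < (rr k : ℝ) ∧
      ((rr k : ℝ) < (F 1).translationNumber) := by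
    intro k
    have hk1 : (1:ℚ) ≤ (k:ℚ) + 1 := by exact_mod_cast Nat.succ_le_succ (Nat.zero_le k)
    have hkpos : (0:ℚ) < (k:ℚ) + 1 := by positivity
    have hgt : q0 < rr k := by
      have : 0 < (q1 - q0) / ((k:ℚ) + 1) := div_pos (by linarith) hkpos
      simp only [hrr]; linarith
    have hle : rr k ≤ q1 := by
      have : (q1 - q0) / ((k:ℚ) + 1) ≤ q1 - q0 := by
        rw [div_le_iff₀ hkpos]; nlinarith
      simp only [hrr]; linarith
    constructor
    · calc (F 0).translationNumber < (q0:ℝ) := h00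
        _ < (rr k : ℝ) := by exact_mod_cast hgt
    · calc (rr k : ℝ) ≤ (q1:ℝ) := by exact_mod_cast hle
        _ < (F 1).translationNumber := h11
  have hrrinj : Function.Injective rr := by
    intro a b hab
    simp only [hrr, add_right_inj] at hab
    have h10 : (q1 - q0) ≠ 0 := by intro h; apply absurd hq01; rw [sub_eq_zero] at h; simp [h]
    have hka : ((a:ℚ)+1) ≠ 0 := by positivity
    have hkb : ((b:ℚ)+1) ≠ 0 := by positivity
    rw [div_eq_div_iff hka hkb] at hab
    have : (a:ℚ) = b := by
      have := mul_left_cancel₀ h10 hab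
      linarith
    exact_mod_cast this
  -- choose parameters
  have hex : ∀ k : ℕ, ∃ c ∈ Set.Icc (0:ℝ) 1, (F c).translationNumber = (rr k : ℝ) :=
    fun k => exists_param_eq F hcont hunif (hrange k).1 (hrange k).2
  choose c hcIcc hcτ using hex
  have hcinj : Function.Injective c := by
    intro a b hab
    apply hrrinj
    have : ((rr a : ℝ)) = ((rr b : ℝ)) := by rw [← hcτ a, ← hcτ b, hab]
    exact_mod_cast this
  apply Set.infinite_of_injective_forall_mem hcinj
  intro k
  refine ⟨hcIcc k, ?_⟩
  have hden : 0 < (rr k).den := (rr k).pos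
  have : (F (c k)).translationNumber = ((rr k).num : ℝ) / ((rr k).den : ℝ) := by
    rw [hcτ k, Rat.cast_def]
  obtain ⟨x, hx⟩ := ((F (c k)).translationNumber_eq_rat_iff (hcont _ (hcIcc k)) hden).1 this
  exact ⟨x, (rr k).den, hden, (rr k).num, hx⟩

/-- In a continuous family of lifts of degree-one circle maps whose translation numbers
at the endpoints differ, the set of parameters at which the induced circle map has a
periodic orbit is infinite. -/
theorem infinite_periodic_parameters_of_translationNumber_ne
    (F : ℝ → CircleDeg1Lift)
    (hcont : ∀ c ∈ Set.Icc (0 : ℝ) 1, Continuous (F c))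
    (hunif : ∀ ε > (0 : ℝ), ∃ δ > (0 : ℝ),
      ∀ c ∈ Set.Icc (0 : ℝ) 1, ∀ c' ∈ Set.Icc (0 : ℝ) 1,
        |c - c'| ≤ δ → ∀ x : ℝ, |F c x - F c' x| ≤ ε)
    (hτ : (F 0).translationNumber ≠ (F 1).translationNumber) :
    {c ∈ Set.Icc (0 : ℝ) 1 | ∃ x : ℝ, ∃ n : ℕ, 1 ≤ n ∧ ∃ m : ℤ,
      ((F c) ^ n) x = x + m}.Infinite := by
  rcases hτ.lt_or_gt with h | h
  · exact aux_infinite F hcont hunif h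
  · -- reverse the family
    set G : ℝ → CircleDeg1Lift := fun c => F (1 - c) with hG
    have hmap : ∀ c : ℝ, c ∈ Set.Icc (0:ℝ) 1 → (1 - c) ∈ Set.Icc (0:ℝ) 1 := by
      intro c hc
      exact ⟨by linarith [hc.2], by linarith [hc.1]⟩
    have hcontG : ∀ c ∈ Set.Icc (0 : ℝ) 1, Continuous (G c) :=
      fun c hc => hcont (1 - c) (hmap c hc)
    have hunifG : ∀ ε > (0 : ℝ), ∃ δ > (0 : ℝ),
        ∀ c ∈ Set.Icc (0 : ℝ) 1, ∀ c' ∈ Set.Icc (0 : ℝ) 1,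
          |c - c'| ≤ δ → ∀ x : ℝ, |G c x - G c' x| ≤ ε := by
      intro ε hε
      obtain ⟨δ, hδ, hδc⟩ := hunif ε hε
      refine ⟨δ, hδ, fun c hc c' hc' habs x => ?_⟩
      apply hδc (1 - c) (hmap c hc) (1 - c') (hmap c' hc')
      · rw [show (1 - c) - (1 - c') = -(c - c') by ring, abs_neg]; exact habs
    have hτG : (G 0).translationNumber < (G 1).translationNumber := by
      simp only [hG, sub_zero, sub_self]
      exact h
    have hinf := aux_infinite G hcontG hunifG hτG
    have himage : (fun c : ℝ => 1 - c) '' {c ∈ Set.Icc (0 : ℝ) 1 | ∃ x : ℝ, ∃ n : ℕ, 1 ≤ n ∧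
        ∃ m : ℤ, ((G c) ^ n) x = x + m} ⊆
        {c ∈ Set.Icc (0 : ℝ) 1 | ∃ x : ℝ, ∃ n : ℕ, 1 ≤ n ∧ ∃ m : ℤ, ((F c) ^ n) x = x + m} := by
      rintro _ ⟨c, ⟨hc, hper⟩, rfl⟩
      exact ⟨hmap c hc, hper⟩
    have hinj : Function.Injective (fun c : ℝ => 1 - c) := fun a b hab => by
      simp only [] at hab
      linarith
    exact Set.Infinite.mono himage (Set.Infinite.image hinj.injOn hinf)
end
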